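/- arXiv:2603.19065 — 6 statements merged into one kernel-verified Lean document; each statement's English description precedes it below -/
import Mathlib

section
/- Fix integers n ≥ 1, d ≥ 1 and an odd integer e ≥ 1 with e ≤ 2d − 1, and set λ := n·e. In the polynomial ring R := ℤ[t, u₀, …, u_{2d}, v₀, …, v_d], define Q(x) := Σ_{0 ≤ j ≤ (e−1)/2} t^{⌈λ/2⌉ − nj} v_j x^j + Σ_{(e+1)/2 ≤ j ≤ d} v_j x^j and P(x) := Σ_{0 ≤ j ≤ e} t^{λ − nj} u_j x^j + Σ_{e < j ≤ 2d} u_j x^j in R[x], and set F := 4P + Q². Then t^{n·e·(e−1)} divides the resultant Res_x(F, ∂F/∂x) in R. -/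
open Polynomial MvPolynomial

/-- The Sylvester matrix of two polynomials `f`, `g`, regarded as having degrees `m` and `n`
respectively: an `(n + m) × (n + m)` matrix whose first `n` rows contain the shifted
coefficient vectors of `f` and whose last `m` rows contain the shifted coefficient
vectors of `g`. -/
def sylvesterMatrix {R : Type*} [CommRing R] (f g : Polynomial R) (m n : ℕ) :
    Matrix (Fin (n + m)) (Fin (n + m)) R :=
  Matrix.of fun i j =>
    if (i : ℕ) < n then
      (if (i : ℕ) ≤ (j : ℕ) ∧ (j : ℕ) ≤ (i : ℕ) + m then f.coeff (m + i - j) else 0)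
    else
      (if (i : ℕ) - n ≤ (j : ℕ) ∧ (j : ℕ) ≤ ((i : ℕ) - n) + n then
        g.coeff (n + ((i : ℕ) - n) - j) else 0)

/-- The resultant of `f` and `g` (w.r.t. the variable of the polynomial ring), regarded as
polynomials of degrees `m` and `n`: the determinant of the Sylvester matrix. -/
noncomputable def resultant {R : Type*} [CommRing R] (f g : Polynomial R) (m n : ℕ) : R :=
  (sylvesterMatrix f g m n).det

private lemma two_mul_sum_tail (N c : ℕ) :
    2 * (∑ j ∈ Finset.range N, (j + 1 - c)) = (N - c) * (N - c + 1) := by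
  induction N with
  | zero => simp
  | succ N ih =>
    rw [Finset.sum_range_succ, Nat.mul_add, ih]
    rcases le_or_gt c N with h | h
    · have h1 : N + 1 - c = (N - c) + 1 := by omega
      have h2 : N - c + 1 = (N - c) + 1 := rfl
      rw [h1]
      generalize N - c = a
      ring
    · have h1 : N - c = 0 := by omega
      have h2 : N + 1 - c = 0 := by omega
      simp [h1, h2]

private lemma sum_range_add_nat (f : ℕ → ℕ) (a b : ℕ) :
    ∑ j ∈ Finset.range (a + b), f j
      = (∑ j ∈ Finset.range a, f j) + ∑ j ∈ Finset.range b, f (a + j) := by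
  induction b with
  | zero => simp
  | succ b ih =>
    rw [Nat.add_succ, Finset.sum_range_succ, ih, Finset.sum_range_succ, add_assoc]

private lemma arith_low_low (n e a b : ℕ) (hn : 1 ≤ n) (ha : 2*a < e) (hb : 2*b < e) :
    n * (e - (a + b)) ≤ ((n*e+1)/2 - n*a) + ((n*e+1)/2 - n*b) := by
  have h1 : n * (e - (a+b)) + n*a + n*b = n*e := by
    have h : (e - (a+b)) + a + b = e := by omega
    calc n * (e - (a+b)) + n*a + n*b = n * ((e - (a+b)) + a + b) := by ring
      _ = n * e := by rw [h]
  have h2 : 2*(n*a) + n ≤ n*e := by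
    calc 2*(n*a) + n = n * (2*a+1) := by ring
      _ ≤ n * e := Nat.mul_le_mul_left n (by omega)
  have h3 : 2*(n*b) + n ≤ n*e := by
    calc 2*(n*b) + n = n * (2*b+1) := by ring
      _ ≤ n * e := Nat.mul_le_mul_left n (by omega)
  omega

private lemma arith_low_high (n e a b : ℕ) (hn : 1 ≤ n) (ha : 2*a < e) (hb : e + 1 ≤ 2*b) :
    n * (e - (a + b)) ≤ (n*e+1)/2 - n*a := by
  rcases le_or_gt e (a+b) with h | h
  · simp [Nat.sub_eq_zero_of_le h]
  · have h1 : n * (e - (a+b)) + n*a + n*b = n*e := by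
      have hh : (e - (a+b)) + a + b = e := by omega
      calc n * (e - (a+b)) + n*a + n*b = n * ((e - (a+b)) + a + b) := by ring
        _ = n * e := by rw [hh]
    have h2 : 2*(n*a) + n ≤ n*e := by
      calc 2*(n*a) + n = n * (2*a+1) := by ring
        _ ≤ n * e := Nat.mul_le_mul_left n (by omega)
    have h3 : n*e + n ≤ 2*(n*b) := by
      calc n*e + n = n*(e+1) := by ring
        _ ≤ n*(2*b) := Nat.mul_le_mul_left n hb
        _ = 2*(n*b) := by ring
    omega

private lemma mul_sub_exact (n a b : ℕ) (h : b ≤ a) : n*(a-b) = n*a - n*b := by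
  obtain ⟨x, rfl⟩ := Nat.exists_eq_add_of_le h
  rw [Nat.add_sub_cancel_left, Nat.mul_add, Nat.add_sub_cancel_left]

/-- Key abstract lemma: if all coefficients of `F` satisfy the valuation bound
`t^(n(e-k)) ∣ F.coeff k`, then `t^(n e (e-1))` divides the resultant of `F` and `F'`. -/
private lemma key {R : Type*} [CommRing R] [IsDomain R] (t : R) (ht : t ≠ 0)
    (n e d : ℕ) (hn : 1 ≤ n) (hd : 1 ≤ d) (he : 1 ≤ e) (he_le : e ≤ 2 * d - 1)
    (F : Polynomial R) (hF : ∀ k, t ^ (n * (e - k)) ∣ F.coeff k) :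
    t ^ (n * e * (e - 1)) ∣ _root_.resultant F (Polynomial.derivative F) (2 * d) (2 * d - 1) := by
  classical
  set Cw : ℕ → ℕ := fun j => n * (2 * e + j + 1 - 4 * d) with hCw
  set Rw : ℕ → ℕ := fun r =>
    if r < 2 * d - 1 then n * (e + r + 1 - 2 * d) else n * (e + r + 2 - 4 * d) with hRw
  have hG : ∀ k, t ^ (n * (e - 1 - k)) ∣ (Polynomial.derivative F).coeff k := by
    intro k
    rw [Polynomial.coeff_derivative]
    have hkk : e - 1 - k = e - (k + 1) := by omega
    rw [hkk]
    exact dvd_mul_of_dvd_left (hF (k+1)) _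
  have entry : ∀ r c : Fin ((2*d-1) + 2*d),
      t ^ Cw (c : ℕ) ∣ t ^ Rw (r : ℕ) *
        sylvesterMatrix F (Polynomial.derivative F) (2*d) (2*d-1) r c := by
    intro r c
    have hr := r.isLt
    have hc := c.isLt
    unfold sylvesterMatrix
    simp only [Matrix.of_apply]
    by_cases h1 : (r : ℕ) < 2*d - 1
    · rw [if_pos h1]
      by_cases h2 : (r:ℕ) ≤ (c:ℕ) ∧ (c:ℕ) ≤ (r:ℕ) + 2*d
      · rw [if_pos h2]
        have hkey : Cw c ≤ Rw r + n * (e - (2*d + (r:ℕ) - (c:ℕ))) := by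
          simp only [hCw, hRw, if_pos h1]
          rw [← Nat.mul_add]
          refine Nat.mul_le_mul_left n ?_
          omega
        calc t ^ Cw (c:ℕ) ∣ t ^ (Rw r + n * (e - (2*d + (r:ℕ) - (c:ℕ)))) := pow_dvd_pow t hkey
          _ = t ^ Rw (r:ℕ) * t ^ (n * (e - (2*d + (r:ℕ) - (c:ℕ)))) := pow_add t _ _
          _ ∣ t ^ Rw (r:ℕ) * F.coeff (2*d + (r:ℕ) - (c:ℕ)) := mul_dvd_mul_left _ (hF _)
      · rw [if_neg h2, mul_zero]
        exact dvd_zero _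
    · rw [if_neg h1]
      by_cases h2 : (r:ℕ) - (2*d-1) ≤ (c:ℕ) ∧ (c:ℕ) ≤ ((r:ℕ) - (2*d-1)) + (2*d-1)
      · rw [if_pos h2]
        set k := 2*d-1 + ((r:ℕ) - (2*d-1)) - (c:ℕ) with hk
        have hkey : Cw c ≤ Rw r + n * (e - 1 - k) := by
          simp only [hCw, hRw, if_neg h1, hk]
          rw [← Nat.mul_add]
          refine Nat.mul_le_mul_left n ?_
          omega
        calc t ^ Cw (c:ℕ) ∣ t ^ (Rw r + n * (e - 1 - k)) := pow_dvd_pow t hkey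
          _ = t ^ Rw (r:ℕ) * t ^ (n * (e - 1 - k)) := pow_add t _ _
          _ ∣ t ^ Rw (r:ℕ) * (Polynomial.derivative F).coeff k := mul_dvd_mul_left _ (hG _)
      · rw [if_neg h2, mul_zero]
        exact dvd_zero _
  have hSum : (∑ i : Fin ((2*d-1) + 2*d), Cw (i:ℕ))
      = (∑ i : Fin ((2*d-1) + 2*d), Rw (i:ℕ)) + n * e * (e - 1) := by
    obtain ⟨s, rfl⟩ : ∃ s, e = s + 1 := ⟨e - 1, by omega⟩
    rw [Fin.sum_univ_eq_sum_range Cw, Fin.sum_univ_eq_sum_range Rw]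
    have hC : ∑ j ∈ Finset.range ((2*d-1) + 2*d), Cw j
        = n * (∑ j ∈ Finset.range ((2*d-1) + 2*d), (j + 1 - (4*d - 2*(s+1)))) := by
      rw [Finset.mul_sum]
      refine Finset.sum_congr rfl fun j _ => ?_
      simp only [hCw]
      congr 1
      omega
    have hR : ∑ j ∈ Finset.range ((2*d-1) + 2*d), Rw j
        = n * (∑ j ∈ Finset.range (2*d-1), (j + 1 - (2*d - (s+1))))
          + n * (∑ j ∈ Finset.range (2*d), (j + 1 - (2*d - (s+1)))) := by
      rw [sum_range_add_nat Rw (2*d-1) (2*d), Finset.mul_sum, Finset.mul_sum]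
      congr 1
      · refine Finset.sum_congr rfl fun j hj => ?_
        have hj' : j < 2*d-1 := Finset.mem_range.mp hj
        simp only [hRw]
        rw [if_pos hj']
        congr 1
        omega
      · refine Finset.sum_congr rfl fun j hj => ?_
        have hj' : j < 2*d := Finset.mem_range.mp hj
        simp only [hRw]
        rw [if_neg (by omega)]
        congr 1
        omega
    rw [hC, hR]
    set S1 := ∑ j ∈ Finset.range ((2*d-1) + 2*d), (j + 1 - (4*d - 2*(s+1))) with hS1d
    set S2 := ∑ j ∈ Finset.range (2*d-1), (j + 1 - (2*d - (s+1))) with hS2d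
    set S3 := ∑ j ∈ Finset.range (2*d), (j + 1 - (2*d - (s+1))) with hS3d
    have t1 := two_mul_sum_tail ((2*d-1) + 2*d) (4*d - 2*(s+1))
    have t2 := two_mul_sum_tail (2*d-1) (2*d - (s+1))
    have t3 := two_mul_sum_tail (2*d) (2*d - (s+1))
    rw [← hS1d] at t1
    rw [← hS2d] at t2
    rw [← hS3d] at t3
    have e1 : ((2*d-1) + 2*d) - (4*d - 2*(s+1)) = 2*s + 1 := by omega
    have e2 : (2*d-1) - (2*d - (s+1)) = s := by omega
    have e3 : (2*d) - (2*d - (s+1)) = s + 1 := by omega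
    rw [e1] at t1
    rw [e2] at t2
    rw [e3] at t3
    have hgoal2 : 2 * (n * S1) = 2 * ((n*S2 + n*S3) + n*(s+1)*((s+1) - 1)) := by
      have hs : (s+1) - 1 = s := by omega
      rw [hs]
      calc 2*(n*S1) = n * (2*S1) := by ring
        _ = n * ((2*s+1)*(2*s+1+1)) := by rw [t1]
        _ = n * ((s*(s+1)) + ((s+1)*(s+1+1)) + 2*((s+1)*s)) := by ring
        _ = n * ((2*S2) + (2*S3) + 2*((s+1)*s)) := by rw [t2, t3]
        _ = 2 * ((n*S2 + n*S3) + n*(s+1)*s) := by ring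
    exact Nat.eq_of_mul_eq_mul_left (by norm_num) hgoal2
  unfold _root_.resultant
  rw [Matrix.det_apply]
  refine Finset.dvd_sum fun σ _ => ?_
  rw [Units.smul_def, zsmul_eq_mul]
  refine Dvd.dvd.mul_left ?_ _
  have h1 : t ^ (∑ i : Fin ((2*d-1) + 2*d), Cw (i:ℕ))
      ∣ ∏ i : Fin ((2*d-1) + 2*d),
          (t ^ Rw ((σ i : Fin _) : ℕ) * sylvesterMatrix F (Polynomial.derivative F) (2*d) (2*d-1) (σ i) i) := by
    rw [← Finset.prod_pow_eq_pow_sum]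
    exact Finset.prod_dvd_prod_of_dvd _ _ (fun i _ => entry (σ i) i)
  rw [Finset.prod_mul_distrib, Finset.prod_pow_eq_pow_sum,
    Equiv.sum_comp σ (fun i : Fin ((2*d-1) + 2*d) => Rw (i:ℕ))] at h1
  rw [hSum, pow_add] at h1
  exact (mul_dvd_mul_iff_left (pow_ne_zero _ ht)).mp h1

private lemma coeff_F_dvd {R : Type*} [CommRing R] (t : R) (n e : ℕ) (hn : 1 ≤ n)
    (he_odd : Odd e) (P Q : Polynomial R)
    (hP : ∀ k, t ^ (n*(e-k)) ∣ P.coeff k)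
    (hQ : ∀ a, t ^ (if 2*a < e then (n*e+1)/2 - n*a else 0) ∣ Q.coeff a) :
    ∀ k, t ^ (n*(e-k)) ∣ (4*P + Q^2).coeff k := by
  intro k
  rw [Polynomial.coeff_add]
  refine dvd_add ?_ ?_
  · have h4 : ((4 : Polynomial R) * P).coeff k = 4 * P.coeff k := by simp
    rw [h4]
    exact (hP k).mul_left 4
  · rw [sq, Polynomial.coeff_mul]
    refine Finset.dvd_sum fun p hp => ?_
    obtain ⟨c, hc⟩ := he_odd
    have hpk : p.1 + p.2 = k := Finset.HasAntidiagonal.mem_antidiagonal.mp hp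
    have hdvd := mul_dvd_mul (hQ p.1) (hQ p.2)
    rw [← pow_add] at hdvd
    refine (pow_dvd_pow _ ?_).trans hdvd
    rw [← hpk]
    by_cases hA : 2*p.1 < e <;> by_cases hB : 2*p.2 < e <;>
      simp only [if_pos, if_neg, hA, hB, if_true, if_false, add_zero, zero_add]
    · exact arith_low_low n e p.1 p.2 hn hA hB
    · exact arith_low_high n e p.1 p.2 hn hA (by omega)
    · rw [show p.1 + p.2 = p.2 + p.1 by ring]
      exact arith_low_high n e p.2 p.1 hn hB (by omega)
    · have : e - (p.1 + p.2) = 0 := by omega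
      simp [this]

/-- with `R = ℤ[t, u₀, …, u_{2d}, v₀, …, v_d]`,
`Q(x) = Σ_{0 ≤ j < e/2} t^(⌈ne/2⌉ − nj) v_j x^j + Σ_{e/2 < j ≤ d} v_j x^j`,
`P(x) = Σ_{0 ≤ j ≤ e} t^(ne − nj) u_j x^j + Σ_{e < j ≤ 2d} u_j x^j` and `F = 4P + Q²`,
the power `t^(n e (e−1))` divides `Res_x(F, F')` in `R`. -/
theorem statement0 (n d e : ℕ) (hn : 1 ≤ n) (hd : 1 ≤ d) (he : 1 ≤ e)
    (he_odd : Odd e) (he_le : e ≤ 2 * d - 1) :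
    letI R := MvPolynomial (Unit ⊕ Fin (2 * d + 1) ⊕ Fin (d + 1)) ℤ
    letI t : R := MvPolynomial.X (Sum.inl ())
    letI u : Fin (2 * d + 1) → R := fun j => MvPolynomial.X (Sum.inr (Sum.inl j))
    letI v : Fin (d + 1) → R := fun j => MvPolynomial.X (Sum.inr (Sum.inr j))
    letI Q : Polynomial R :=
      ∑ j : Fin (d + 1),
        (if 2 * (j : ℕ) < e then
          Polynomial.C (t ^ ((n * e + 1) / 2 - n * j) * v j) * Polynomial.X ^ (j : ℕ)
        else Polynomial.C (v j) * Polynomial.X ^ (j : ℕ))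
    letI P : Polynomial R :=
      ∑ j : Fin (2 * d + 1),
        (if (j : ℕ) ≤ e then
          Polynomial.C (t ^ (n * e - n * j) * u j) * Polynomial.X ^ (j : ℕ)
        else Polynomial.C (u j) * Polynomial.X ^ (j : ℕ))
    letI F : Polynomial R := 4 * P + Q ^ 2
    t ^ (n * e * (e - 1)) ∣ _root_.resultant F (Polynomial.derivative F) (2 * d) (2 * d - 1) := by
  refine key (MvPolynomial.X (Sum.inl ())) (MvPolynomial.X_ne_zero _) n e d hn hd he he_le _
    (coeff_F_dvd _ n e hn he_odd _ _ ?_ ?_)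
  · intro k
    rw [Polynomial.finset_sum_coeff]
    refine Finset.dvd_sum fun j _ => ?_
    by_cases hj : (j:ℕ) ≤ e
    · rw [if_pos hj, Polynomial.coeff_C_mul, Polynomial.coeff_X_pow]
      by_cases hk : k = (j:ℕ)
      · rw [if_pos hk, mul_one]
        refine dvd_mul_of_dvd_left (pow_dvd_pow _ ?_) _
        rw [hk, mul_sub_exact n e _ hj]
      · rw [if_neg hk, mul_zero]
        exact dvd_zero _
    · rw [if_neg hj, Polynomial.coeff_C_mul, Polynomial.coeff_X_pow]
      by_cases hk : k = (j:ℕ)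
      · rw [if_pos hk, mul_one]
        have h0 : e - k = 0 := by omega
        rw [h0, Nat.mul_zero, pow_zero]
        exact one_dvd _
      · rw [if_neg hk, mul_zero]
        exact dvd_zero _
  · intro a
    rw [Polynomial.finset_sum_coeff]
    refine Finset.dvd_sum fun j _ => ?_
    by_cases hj : 2*(j:ℕ) < e
    · rw [if_pos hj, Polynomial.coeff_C_mul, Polynomial.coeff_X_pow]
      by_cases ha : a = (j:ℕ)
      · rw [if_pos ha, mul_one, if_pos (by omega : 2*a < e)]
        subst ha
        exact dvd_mul_right _ _
      · rw [if_neg ha, mul_zero]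
        exact dvd_zero _
    · rw [if_neg hj, Polynomial.coeff_C_mul, Polynomial.coeff_X_pow]
      by_cases ha : a = (j:ℕ)
      · rw [if_pos ha, mul_one, if_neg (by omega : ¬ 2*a < e), pow_zero]
        exact one_dvd _
      · rw [if_neg ha, mul_zero]
        exact dvd_zero _
end

section
/- Let O_K be a discrete valuation ring with fraction field K, uniformizer π and normalized valuation ν. Fix integers n, d ≥ 1 and an odd integer e ≥ 1 with e ≤ 2d − 1; set λ := n·e. Let Q = Σ_{0 ≤ j ≤ d} b_j x^j and P = Σ_{0 ≤ j ≤ 2d} a_j x^j in O_K[x] satisfy ν(b_j) ≥ ⌈λ/2⌉ − nj for all 0 ≤ j ≤ (e−1)/2 and ν(a_j) ≥ λ − nj for all 0 ≤ j ≤ e. If the polynomial F := 4P + Q² has degree exactly 2d and splits over K, then ν(disc(F)) ≥ n·e·(e−1). -/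
open Polynomial

/-- The discriminant of a split polynomial of degree `D`, with leading coefficient `c` and
roots `r 0, …, r (D-1)` listed with multiplicity:
`disc = c^(2D−2) ∏_{i<j} (r i − r j)²`. -/
noncomputable def discOfRoots {K : Type*} [Field K] (D : ℕ) (c : K) (r : Fin D → K) : K :=
  c ^ (2 * D - 2) *
    ∏ i : Fin D, ∏ j ∈ Finset.univ.filter (fun j => i < j), (r i - r j) ^ 2



open Polynomial Finset

set_option linter.unusedSectionVars false

section Valuation

variable {O_K : Type*} [CommRing O_K] [IsDomain O_K] [IsDiscreteValuationRing O_K]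
    {K : Type*} [Field K] [Algebra O_K K] [IsFractionRing O_K K]
    {π : O_K}

local notation "φ" => algebraMap O_K K

lemma phi_ne_zero {a : O_K} (ha : a ≠ 0) : (φ a) ≠ 0 := fun h =>
  ha ((IsFractionRing.injective O_K K) (by rw [h, map_zero]))

lemma phi_pi_ne_zero (hπ : Irreducible π) : (φ π) ≠ 0 := phi_ne_zero hπ.ne_zero

lemma phi_unit_ne_zero (u : O_Kˣ) : (φ (u : O_K)) ≠ 0 := phi_ne_zero u.ne_zero

lemma exists_rep (hπ : Irreducible π) (x : K) (hx : x ≠ 0) :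
    ∃ m : ℤ, ∃ u : O_Kˣ, x = φ u * (φ π) ^ m := by
  obtain ⟨p, q, hq, hpq⟩ := IsFractionRing.div_surjective (A := O_K) x
  have hq0 : q ≠ 0 := nonZeroDivisors.ne_zero hq
  have hp0 : p ≠ 0 := by
    rintro rfl; simp at hpq; exact hx hpq.symm
  obtain ⟨s, u, hu⟩ := IsDiscreteValuationRing.eq_unit_mul_pow_irreducible hp0 hπ
  obtain ⟨t, w, hw⟩ := IsDiscreteValuationRing.eq_unit_mul_pow_irreducible hq0 hπ
  have hπ0 := phi_pi_ne_zero (K := K) hπ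
  refine ⟨(s : ℤ) - t, u * w⁻¹, ?_⟩
  have hinv : (φ (((w⁻¹ : O_Kˣ) : O_K))) = (φ (w : O_K))⁻¹ := by
    refine eq_inv_of_mul_eq_one_left ?_
    rw [← map_mul]
    simp
  rw [← hpq, hu, hw, Units.val_mul, map_mul, map_mul, map_mul, map_pow, map_pow, hinv,
    zpow_sub₀ hπ0, zpow_natCast, zpow_natCast]
  field_simp

lemma rep_unique (hπ : Irreducible π) {m m' : ℤ} {u u' : O_Kˣ}
    (h : (φ u) * (φ π) ^ m = (φ u') * (φ π) ^ m') : m = m' := by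
  have hπ0 := phi_pi_ne_zero (K := K) hπ
  by_contra hne
  wlog hlt : m' < m generalizing m m' u u'
  · exact this h.symm (Ne.symm hne) (by omega)
  have key : (φ (u : O_K)) * (φ π) ^ (m - m') = φ (u' : O_K) := by
    have h2 := congrArg (· * (φ π) ^ (-m')) h
    rw [mul_assoc, mul_assoc, ← zpow_add₀ hπ0, ← zpow_add₀ hπ0] at h2
    simpa [sub_eq_add_neg] using h2
  obtain ⟨kn, hkn, hkn0⟩ : ∃ kn : ℕ, m - m' = (kn : ℤ) ∧ kn ≠ 0 :=
    ⟨(m - m').toNat, by omega, by omega⟩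
  rw [hkn, zpow_natCast, ← map_pow, ← map_mul] at key
  have key2 : (u : O_K) * π ^ kn = (u' : O_K) := (IsFractionRing.injective O_K K) key
  have hpu : IsUnit (π ^ kn) := by
    refine isUnit_of_mul_isUnit_left (y := (u : O_K)) ?_
    rw [mul_comm, key2]; exact u'.isUnit
  rcases Nat.exists_eq_succ_of_ne_zero hkn0 with ⟨k', rfl⟩
  rw [pow_succ'] at hpu
  exact hπ.not_isUnit (isUnit_of_mul_isUnit_left hpu)

open Classical in
/-- the additive valuation on `K` (depending on a choice of uniformizer). -/
noncomputable def vK (π : O_K) (x : K) : WithTop ℤ :=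
  if hx : x = 0 then ⊤ else
    if hπ : Irreducible π then ((Classical.choose (exists_rep hπ x hx) : ℤ) : WithTop ℤ) else 0

lemma vK_zero : vK (K := K) π 0 = ⊤ := by simp [vK]

lemma vK_eq_iff (hπ : Irreducible π) {x : K} (hx : x ≠ 0) {m : ℤ} :
    vK π x = (m : WithTop ℤ) ↔ ∃ u : O_Kˣ, x = φ u * (φ π) ^ m := by
  rw [vK, dif_neg hx, dif_pos hπ]
  constructor
  · rintro h
    obtain ⟨u, hu⟩ := Classical.choose_spec (exists_rep hπ x hx)
    have h2 : Classical.choose (exists_rep hπ x hx) = m := by exact_mod_cast h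
    exact ⟨u, by rwa [← h2]⟩
  · rintro ⟨u, hu⟩
    obtain ⟨u', hu'⟩ := Classical.choose_spec (exists_rep hπ x hx)
    have := rep_unique hπ (hu'.symm.trans hu)
    exact_mod_cast this

lemma vK_of_rep (hπ : Irreducible π) {x : K} {m : ℤ} {u : O_Kˣ}
    (h : x = φ u * (φ π) ^ m) : vK π x = (m : WithTop ℤ) := by
  have hx : x ≠ 0 := by
    rw [h]
    exact mul_ne_zero (phi_unit_ne_zero u) (zpow_ne_zero _ (phi_pi_ne_zero hπ))
  exact (vK_eq_iff hπ hx).2 ⟨u, h⟩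

lemma vK_ne_top (hπ : Irreducible π) {x : K} (hx : x ≠ 0) : vK π x ≠ ⊤ := by
  obtain ⟨m, u, h⟩ := exists_rep hπ x hx
  rw [vK_of_rep hπ h]; simp

lemma vK_eq_top_iff (hπ : Irreducible π) {x : K} : vK π x = ⊤ ↔ x = 0 := by
  constructor
  · intro h; by_contra hx; exact vK_ne_top hπ hx h
  · rintro rfl; exact vK_zero

lemma vK_mul (hπ : Irreducible π) (x y : K) : vK π (x * y) = vK π x + vK π y := by
  rcases eq_or_ne x 0 with rfl | hx
  · simp [vK_zero]
  rcases eq_or_ne y 0 with rfl | hy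
  · simp [vK_zero]
  obtain ⟨m, u, hu⟩ := exists_rep hπ x hx
  obtain ⟨m', u', hu'⟩ := exists_rep hπ y hy
  rw [vK_of_rep hπ hu, vK_of_rep hπ hu']
  have h3 : x * y = φ (↑(u * u')) * (φ π) ^ (m + m') := by
    rw [hu, hu', zpow_add₀ (phi_pi_ne_zero hπ), Units.val_mul, map_mul]
    ring
  rw [vK_of_rep hπ h3]
  push_cast
  rfl

lemma vK_one (hπ : Irreducible π) : vK (K := K) π 1 = 0 := by
  have h : (1 : K) = φ ((1 : O_Kˣ) : O_K) * (φ π) ^ (0 : ℤ) := by simp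
  rw [vK_of_rep hπ h]; rfl

lemma vK_pi (hπ : Irreducible π) : vK (K := K) π (φ π) = 1 := by
  have h : (φ π : K) = φ ((1 : O_Kˣ) : O_K) * (φ π) ^ (1 : ℤ) := by simp
  rw [vK_of_rep hπ h]; rfl

lemma vK_algebraMap_nonneg (hπ : Irreducible π) (a : O_K) : 0 ≤ vK π (φ a) := by
  rcases eq_or_ne a 0 with rfl | ha
  · simp [vK_zero]
  obtain ⟨s, u, hu⟩ := IsDiscreteValuationRing.eq_unit_mul_pow_irreducible ha hπ
  have h : (φ a : K) = φ (u : O_K) * (φ π) ^ (s : ℤ) := by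
    rw [hu, map_mul, map_pow, zpow_natCast]
  rw [vK_of_rep hπ h]
  exact_mod_cast Int.ofNat_nonneg s

lemma vK_algebraMap_dvd (hπ : Irreducible π) {s : ℕ} {a : O_K} (h : π ^ s ∣ a) :
    ((s : ℤ) : WithTop ℤ) ≤ vK π (φ a) := by
  obtain ⟨c, rfl⟩ := h
  rw [map_mul, vK_mul hπ]
  have h1 : vK (K := K) π (φ (π ^ s)) = ((s : ℤ) : WithTop ℤ) := by
    have h2 : (φ (π ^ s) : K) = φ ((1 : O_Kˣ) : O_K) * (φ π) ^ (s : ℤ) := by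
      rw [Units.val_one, map_one, one_mul, map_pow, zpow_natCast]
    rw [vK_of_rep hπ h2]
  rw [h1]
  have h3 := vK_algebraMap_nonneg (K := K) hπ c
  calc ((s : ℤ) : WithTop ℤ) = ((s : ℤ) : WithTop ℤ) + 0 := by rw [add_zero]
  _ ≤ ((s : ℤ) : WithTop ℤ) + vK π (φ c) := add_le_add_right h3 _

lemma vK_of_nonneg (hπ : Irreducible π) {x : K} (h : 0 ≤ vK π x) :
    ∃ a : O_K, φ a = x := by
  rcases eq_or_ne x 0 with rfl | hx
  · exact ⟨0, by simp⟩
  obtain ⟨m, u, hu⟩ := exists_rep hπ x hx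
  rw [vK_of_rep hπ hu] at h
  have hm : (0:ℤ) ≤ m := by exact_mod_cast h
  obtain ⟨mn, rfl⟩ : ∃ mn : ℕ, m = (mn : ℤ) := ⟨m.toNat, by omega⟩
  exact ⟨u * π ^ mn, by rw [map_mul, map_pow, hu, zpow_natCast]⟩

lemma vK_neg (hπ : Irreducible π) (x : K) : vK π (-x) = vK π x := by
  rcases eq_or_ne x 0 with rfl | hx
  · simp
  obtain ⟨m, u, hu⟩ := exists_rep hπ x hx
  have h2 : -x = φ ((-u : O_Kˣ) : O_K) * (φ π) ^ m := by
    rw [hu, Units.val_neg, map_neg]; ring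
  rw [vK_of_rep hπ hu, vK_of_rep hπ h2]

private lemma vK_add_aux (hπ : Irreducible π) {x y : K} (hx : x ≠ 0) (hy : y ≠ 0)
    (hle : vK π x ≤ vK π y) : vK π x ≤ vK π (x + y) := by
  obtain ⟨m, u, hu⟩ := exists_rep hπ x hx
  obtain ⟨m', u', hu'⟩ := exists_rep hπ y hy
  have hm : vK π x = ((m:ℤ) : WithTop ℤ) := vK_of_rep hπ hu
  have hm' : vK π y = ((m':ℤ) : WithTop ℤ) := vK_of_rep hπ hu'
  rw [hm, hm'] at hle
  have hmm' : m ≤ m' := by exact_mod_cast hle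
  obtain ⟨t, ht⟩ : ∃ t : ℕ, m' = m + (t : ℤ) := ⟨(m' - m).toNat, by omega⟩
  have hxy : x + y = (φ π) ^ m * φ ((u : O_K) + (u' : O_K) * π ^ t) := by
    rw [hu, hu', ht, zpow_add₀ (phi_pi_ne_zero hπ), map_add, map_mul, map_pow, zpow_natCast]
    ring
  rcases eq_or_ne ((u : O_K) + (u' : O_K) * π ^ t) 0 with hz | hz
  · rw [hxy, hz, map_zero, mul_zero, vK_zero, hm]; exact le_top
  obtain ⟨s, w, hw⟩ := IsDiscreteValuationRing.eq_unit_mul_pow_irreducible hz hπ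
  have h4 : x + y = φ (w : O_K) * (φ π) ^ (m + (s : ℤ)) := by
    rw [hxy, hw, map_mul, map_pow, zpow_add₀ (phi_pi_ne_zero hπ), zpow_natCast]
    ring
  rw [vK_of_rep hπ h4, hm]
  exact_mod_cast by omega

lemma vK_add (hπ : Irreducible π) (x y : K) : min (vK π x) (vK π y) ≤ vK π (x + y) := by
  rcases eq_or_ne x 0 with rfl | hx
  · simp
  rcases eq_or_ne y 0 with rfl | hy
  · simp
  rcases le_total (vK π x) (vK π y) with hle | hle
  · rw [min_eq_left hle]; exact vK_add_aux hπ hx hy hle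
  · rw [min_eq_right hle, add_comm]; exact vK_add_aux hπ hy hx hle

end Valuation
section NP

variable {O_K : Type*} [CommRing O_K] [IsDomain O_K] [IsDiscreteValuationRing O_K]
    {K : Type*} [Field K] [Algebra O_K K] [IsFractionRing O_K K]
    {π : O_K}

local notation "φ" => algebraMap O_K K

lemma vK_sum_ge {ι : Type*} (hπ : Irreducible π) (s : Finset ι) (f : ι → K) (y : WithTop ℤ)
    (h : ∀ i ∈ s, y ≤ vK π (f i)) : y ≤ vK π (∑ i ∈ s, f i) := by
  classical
  induction s using Finset.cons_induction with
  | empty => simp [vK_zero]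
  | cons a s ha ih =>
    rw [Finset.sum_cons]
    refine le_trans ?_ (vK_add hπ _ _)
    rw [le_min_iff]
    exact ⟨h a (Finset.mem_cons_self a s), ih fun i hi => h i (Finset.mem_cons_of_mem hi)⟩

lemma vK_prod {ι : Type*} (hπ : Irreducible π) (s : Finset ι) (f : ι → K) :
    vK π (∏ i ∈ s, f i) = ∑ i ∈ s, vK π (f i) := by
  classical
  induction s using Finset.cons_induction with
  | empty => simpa using vK_one hπ
  | cons a s ha ih => rw [Finset.prod_cons, Finset.sum_cons, vK_mul hπ, ih]

lemma vK_pow (hπ : Irreducible π) (x : K) (k : ℕ) : vK π (x ^ k) = k • vK π x := by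
  rw [show x ^ k = ∏ _i ∈ Finset.range k, x by rw [Finset.prod_const, Finset.card_range],
    vK_prod hπ, Finset.sum_const, Finset.card_range]

lemma wt_lt_iff {x y : WithTop ℤ} (hx : x ≠ ⊤) : x < y ↔ x + 1 ≤ y := by
  lift x to ℤ using hx
  cases y with
  | top => simp
  | coe a =>
    rw [← WithTop.coe_one, ← WithTop.coe_add, WithTop.coe_lt_coe, WithTop.coe_le_coe]
    omega

lemma vK_add_eq_left (hπ : Irreducible π) {x y : K} (h : vK π x < vK π y) :
    vK π (x + y) = vK π x := by
  refine le_antisymm ?_ (by simpa [min_eq_left h.le] using vK_add hπ x y)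
  have h2 := vK_add hπ (x + y) (-y)
  rw [vK_neg hπ] at h2
  simp only [add_neg_cancel_right] at h2
  rcases min_cases (vK π (x + y)) (vK π y) with ⟨hm, _⟩ | ⟨hm, hle⟩
  · rwa [hm] at h2
  · rw [hm] at h2; exact absurd (lt_of_lt_of_le h h2) (lt_irrefl _)

lemma vK_sum_eq {ι : Type*} (hπ : Irreducible π) (s : Finset ι) (f : ι → K) (x₀ : ι)
    (hx₀ : x₀ ∈ s) (hfin : vK π (f x₀) ≠ ⊤)
    (h : ∀ i ∈ s, i ≠ x₀ → vK π (f x₀) < vK π (f i)) :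
    vK π (∑ i ∈ s, f i) = vK π (f x₀) := by
  classical
  rw [← Finset.add_sum_erase _ f hx₀]
  have hrest : vK π (f x₀) < vK π (∑ i ∈ s.erase x₀, f i) := by
    rw [wt_lt_iff hfin]
    refine vK_sum_ge hπ _ _ _ fun i hi => ?_
    have hi' := Finset.mem_of_mem_erase hi
    have hne := Finset.ne_of_mem_erase hi
    rw [← wt_lt_iff hfin]
    exact h i hi' hne
  exact vK_add_eq_left hπ hrest

variable {D : ℕ}

/-- sum of valuations of the first `k` coordinates -/
noncomputable def Tsum (π : O_K) (r : Fin D → K) (k : ℕ) : WithTop ℤ :=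
  ∑ i ∈ Finset.univ.filter (fun i : Fin D => (i : ℕ) < k), vK π (r i)

/-- elementary symmetric function -/
noncomputable def Esym (r : Fin D → K) (k : ℕ) : K :=
  ∑ t ∈ Finset.powersetCard k (Finset.univ : Finset (Fin D)), ∏ i ∈ t, r i

lemma card_filter_lt (k : ℕ) (hk : k ≤ D) :
    #(Finset.univ.filter (fun i : Fin D => (i : ℕ) < k)) = k := by
  have he : Finset.univ.filter (fun i : Fin D => (i : ℕ) < k) =
      (Finset.range k).attachFin (fun m hm => lt_of_lt_of_le (Finset.mem_range.1 hm) hk) := by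
    ext i
    simp [Finset.mem_attachFin]
  rw [he, Finset.card_attachFin, Finset.card_range]

lemma card_filter_ico (a k : ℕ) (hk : k ≤ D) :
    #(Finset.univ.filter (fun i : Fin D => a ≤ (i : ℕ) ∧ (i : ℕ) < k)) = k - a := by
  have he : Finset.univ.filter (fun i : Fin D => a ≤ (i : ℕ) ∧ (i : ℕ) < k) =
      (Finset.Ico a k).attachFin (fun m hm => lt_of_lt_of_le (Finset.mem_Ico.1 hm).2 hk) := by
    ext i
    simp [Finset.mem_attachFin]
  rw [he, Finset.card_attachFin, Nat.card_Ico]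

lemma Tsum_zero (r : Fin D → K) : Tsum π r 0 = 0 := by
  unfold Tsum
  rw [Finset.filter_false_of_mem (fun i _ => by omega), Finset.sum_empty]

lemma Tsum_split (hπ : Irreducible π) (r : Fin D → K) {a t : ℕ} (hat : a ≤ t) (htD : t ≤ D)
    {μ : WithTop ℤ} (hplat : ∀ i : Fin D, a ≤ (i : ℕ) → (i : ℕ) < t → vK π (r i) = μ) :
    Tsum π r t = Tsum π r a + (t - a) • μ := by
  classical
  unfold Tsum
  have hsplit : Finset.univ.filter (fun i : Fin D => (i : ℕ) < t) =
      Finset.univ.filter (fun i : Fin D => (i : ℕ) < a) ∪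
      Finset.univ.filter (fun i : Fin D => a ≤ (i : ℕ) ∧ (i : ℕ) < t) := by
    ext i
    simp only [Finset.mem_filter, Finset.mem_union, Finset.mem_univ, true_and]
    omega
  have hdisj : Disjoint (Finset.univ.filter (fun i : Fin D => (i : ℕ) < a))
      (Finset.univ.filter (fun i : Fin D => a ≤ (i : ℕ) ∧ (i : ℕ) < t)) := by
    rw [Finset.disjoint_filter]
    intro i _ h1
    omega
  rw [hsplit, Finset.sum_union hdisj]
  congr 1
  rw [Finset.sum_congr rfl (fun i hi => by
    simp only [Finset.mem_filter] at hi
    exact hplat i hi.2.1 hi.2.2), Finset.sum_const, card_filter_ico a t htD]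

lemma vK_Esym (hπ : Irreducible π) (r : Fin D → K) (a : ℕ) (haD : a ≤ D)
    (hsep : ∀ i j : Fin D, (i : ℕ) < a → a ≤ (j : ℕ) → vK π (r i) < vK π (r j))
    (hfin : ∀ i : Fin D, (i : ℕ) < a → vK π (r i) ≠ ⊤) :
    vK π (Esym r a) = Tsum π r a := by
  classical
  set t₀ := Finset.univ.filter (fun i : Fin D => (i : ℕ) < a) with ht₀
  have ht₀card : #t₀ = a := card_filter_lt a haD
  have ht₀mem : t₀ ∈ Finset.powersetCard a (Finset.univ : Finset (Fin D)) := by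
    rw [Finset.mem_powersetCard]; exact ⟨Finset.subset_univ _, ht₀card⟩
  have hT0 : vK π (∏ i ∈ t₀, r i) = Tsum π r a := vK_prod hπ _ _
  have hT0fin : Tsum π r a ≠ ⊤ := by
    rw [Ne, Tsum, WithTop.sum_eq_top]
    rintro ⟨i, hi, hitop⟩
    simp only [Finset.mem_filter] at hi
    exact hfin i hi.2 hitop
  have hval : ∀ t ∈ Finset.powersetCard a (Finset.univ : Finset (Fin D)), t ≠ t₀ →
      vK π (∏ i ∈ t₀, r i) < vK π (∏ i ∈ t, r i) := by
    intro t ht htne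
    rw [Finset.mem_powersetCard] at ht
    rw [hT0, vK_prod hπ]
    -- split
    have hcards : #t = #t₀ := by rw [ht.2, ht₀card]
    have hsd : #(t₀ \ t) = #(t \ t₀) := Finset.card_sdiff_comm hcards.symm
    have hne : (t₀ \ t).Nonempty := by
      rw [Finset.nonempty_iff_ne_empty]
      intro hemp
      have hsub : t₀ ⊆ t := by
        intro i hi
        by_contra hit
        exact absurd hemp (Finset.nonempty_iff_ne_empty.1 ⟨i, Finset.mem_sdiff.2 ⟨hi, hit⟩⟩)
      exact htne (Finset.eq_of_subset_of_card_le hsub (le_of_eq hcards)).symm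
    -- elements of t₀ \ t are < a; elements of t \ t₀ are ≥ a
    have hlo : ∀ i ∈ t₀ \ t, (i : ℕ) < a := fun i hi => by
      have := (Finset.mem_sdiff.1 hi).1
      rw [ht₀, Finset.mem_filter] at this
      exact this.2
    have hhi : ∀ i ∈ t \ t₀, a ≤ (i : ℕ) := fun i hi => by
      have := (Finset.mem_sdiff.1 hi).2
      rw [ht₀, Finset.mem_filter] at this
      simp only [Finset.mem_univ, true_and] at this
      omega
    -- strict inequality between the sdiff sums
    have hstrict : ∑ i ∈ t₀ \ t, vK π (r i) < ∑ i ∈ t \ t₀, vK π (r i) := by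
      have hfin2 : ∑ i ∈ t₀ \ t, vK π (r i) ≠ ⊤ := by
        rw [Ne, WithTop.sum_eq_top]
        rintro ⟨i, hi, hitop⟩
        exact hfin i (hlo i hi) hitop
      rw [wt_lt_iff hfin2]
      obtain ⟨x, hx⟩ := hne
      -- bijection
      have e := Finset.equivOfCardEq hsd
      calc (∑ i ∈ t₀ \ t, vK π (r i)) + 1
          ≤ ∑ i ∈ (t₀ \ t).attach, (vK π (r i.1) + 1) := by
            rw [Finset.sum_attach (t₀ \ t) (fun i => vK π (r i) + 1), Finset.sum_add_distrib,
              Finset.sum_const]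
            refine add_le_add_right ?_ _
            obtain ⟨m, hm⟩ : ∃ m, #(t₀ \ t) = m + 1 :=
              ⟨#(t₀ \ t) - 1, by have : 1 ≤ #(t₀ \ t) := Finset.card_pos.2 ⟨x, hx⟩; omega⟩
            rw [hm, succ_nsmul]
            exact le_add_of_nonneg_left (nsmul_nonneg zero_le_one m)
        _ ≤ ∑ i ∈ (t₀ \ t).attach, vK π (r (e i).1) := by
            refine Finset.sum_le_sum fun i _ => ?_
            rw [← wt_lt_iff (hfin i.1 (hlo i.1 i.2))]
            exact hsep i.1 (e i).1 (hlo i.1 i.2) (hhi (e i).1 (e i).2)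
        _ = ∑ i ∈ t \ t₀, vK π (r i) := by
            rw [← Finset.sum_attach (t \ t₀) (fun i => vK π (r i))]
            exact Finset.sum_equiv e (by simp) (by simp)
    have hfin3 : ∑ i ∈ t ∩ t₀, vK π (r i) ≠ ⊤ := by
      rw [Ne, WithTop.sum_eq_top]
      rintro ⟨i, hi, hitop⟩
      have := (Finset.mem_inter.1 hi).2
      rw [ht₀, Finset.mem_filter] at this
      exact hfin i this.2 hitop
    calc ∑ i ∈ t₀, vK π (r i)
        = ∑ i ∈ t₀ ∩ t, vK π (r i) + ∑ i ∈ t₀ \ t, vK π (r i) :=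
          (Finset.sum_inter_add_sum_sdiff t₀ t _).symm
      _ = ∑ i ∈ t ∩ t₀, vK π (r i) + ∑ i ∈ t₀ \ t, vK π (r i) := by rw [Finset.inter_comm]
      _ < ∑ i ∈ t ∩ t₀, vK π (r i) + ∑ i ∈ t \ t₀, vK π (r i) :=
          WithTop.add_lt_add_left hfin3 hstrict
      _ = ∑ i ∈ t, vK π (r i) := Finset.sum_inter_add_sum_sdiff t t₀ _
  have := vK_sum_eq hπ (Finset.powersetCard a (Finset.univ : Finset (Fin D)))
    (fun t => ∏ i ∈ t, r i) t₀ ht₀mem (by rw [hT0]; exact hT0fin)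
    (fun t ht htne => hval t ht htne)
  rw [Esym, this, hT0]

end NP
section NP2

variable {O_K : Type*} [CommRing O_K] [IsDomain O_K] [IsDiscreteValuationRing O_K]
    {K : Type*} [Field K] [Algebra O_K K] [IsFractionRing O_K K]
    {π : O_K} {D : ℕ}

local notation "φ" => algebraMap O_K K

lemma Esym_perm (r : Fin D → K) (σ : Equiv.Perm (Fin D)) (k : ℕ) :
    Esym (fun i => r (σ i)) k = Esym r k := by
  unfold Esym
  refine Finset.sum_nbij' (fun t => t.map σ.toEmbedding) (fun t => t.map σ.symm.toEmbedding)
    ?_ ?_ ?_ ?_ ?_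
  · intro t ht
    rw [Finset.mem_powersetCard] at ht ⊢
    exact ⟨Finset.subset_univ _, by rw [Finset.card_map, ht.2]⟩
  · intro t ht
    rw [Finset.mem_powersetCard] at ht ⊢
    exact ⟨Finset.subset_univ _, by rw [Finset.card_map, ht.2]⟩
  · intro t ht
    rw [Finset.map_map]
    ext i
    simp
  · intro t ht
    rw [Finset.map_map]
    ext i
    simp
  · intro t ht
    rw [Finset.prod_map]
    rfl

theorem NP_main (hπ : Irreducible π) (c : K) (hc : c ≠ 0) (r : Fin D → K)
    (hmono : Monotone fun i : Fin D => vK π (r i))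
    (B : ℕ → ℤ)
    (hB : ∀ a k b : ℕ, a ≤ k → k ≤ b → b ≤ D →
      ((b : ℤ) - a) * B k ≤ ((b : ℤ) - k) * B a + ((k : ℤ) - a) * B b)
    (hcoeff : ∀ k, k ≤ D → ((B k : ℤ) : WithTop ℤ) ≤ vK π (c * Esym r k)) :
    ∀ k, k ≤ D → ((B k : ℤ) : WithTop ℤ) ≤ vK π c + Tsum π r k := by
  classical
  intro k hk
  by_cases htop : ∃ i : Fin D, (i : ℕ) < k ∧ vK π (r i) = ⊤
  · obtain ⟨i, hik, hit⟩ := htop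
    have : Tsum π r k = ⊤ := by
      rw [Tsum, WithTop.sum_eq_top]
      exact ⟨i, Finset.mem_filter.2 ⟨Finset.mem_univ _, hik⟩, hit⟩
    rw [this, add_top]
    exact le_top
  push_neg at htop
  rcases Nat.eq_zero_or_pos k with rfl | hk1
  · rw [Tsum_zero, add_zero]
    have h0 : Esym r 0 = 1 := by
      rw [Esym, Finset.powersetCard_zero, Finset.sum_singleton, Finset.prod_empty]
    have := hcoeff 0 (by omega)
    rwa [h0, mul_one] at this
  -- k ≥ 1
  have hkD : k - 1 < D := by omega
  set i₀ : Fin D := ⟨k - 1, hkD⟩ with hi₀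
  set μ := vK π (r i₀) with hμ
  have hμtop : μ ≠ ⊤ := htop i₀ (by simp [hi₀]; omega)
  -- a
  have hPex : ∃ t, ∀ i : Fin D, t ≤ (i : ℕ) → μ ≤ vK π (r i) :=
    ⟨k - 1, fun i hi => hmono (show i₀ ≤ i by rw [Fin.le_def]; simpa [hi₀] using hi)⟩
  set a := Nat.find hPex with ha
  have haP : ∀ i : Fin D, a ≤ (i : ℕ) → μ ≤ vK π (r i) := Nat.find_spec hPex
  have hak : a ≤ k - 1 := Nat.find_le (fun i hi => hmono
    (show i₀ ≤ i by rw [Fin.le_def]; simpa [hi₀] using hi))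
  have halo : ∀ i : Fin D, (i : ℕ) < a → vK π (r i) < μ := by
    intro i hi
    have hanz : a ≠ 0 := by omega
    have := Nat.find_min hPex (m := a - 1) (by omega)
    push_neg at this
    obtain ⟨j, hj1, hj2⟩ := this
    calc vK π (r i) ≤ vK π (r j) := hmono (by rw [Fin.le_def]; omega)
    _ < μ := hj2
  -- b
  have hQex : ∃ t, ∀ i : Fin D, t ≤ (i : ℕ) → μ < vK π (r i) :=
    ⟨D, fun i hi => absurd i.2 (by omega)⟩
  set b := Nat.find hQex with hb
  have hbQ : ∀ i : Fin D, b ≤ (i : ℕ) → μ < vK π (r i) := Nat.find_spec hQex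
  have hbD : b ≤ D := Nat.find_le (fun i hi => absurd i.2 (by omega))
  have hkb : k ≤ b := by
    by_contra hcon
    exact absurd (hbQ i₀ (by simp [hi₀]; omega)) (lt_irrefl μ)
  have hblo : ∀ i : Fin D, (i : ℕ) < b → vK π (r i) ≤ μ := by
    intro i hi
    have hbnz : b ≠ 0 := by omega
    have := Nat.find_min hQex (m := b - 1) (by omega)
    push_neg at this
    obtain ⟨j, hj1, hj2⟩ := this
    calc vK π (r i) ≤ vK π (r j) := hmono (by rw [Fin.le_def]; omega)
    _ ≤ μ := hj2
  have hplat : ∀ i : Fin D, a ≤ (i : ℕ) → (i : ℕ) < b → vK π (r i) = μ :=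
    fun i h1 h2 => le_antisymm (hblo i h2) (haP i h1)
  -- evaluate Esym at a and b
  have hEA : vK π (Esym r a) = Tsum π r a :=
    vK_Esym hπ r a (by omega)
      (fun i j hi hj => lt_of_lt_of_le (halo i hi) (haP j hj))
      (fun i hi => ne_top_of_lt (halo i hi))
  have hEB : vK π (Esym r b) = Tsum π r b :=
    vK_Esym hπ r b hbD
      (fun i j hi hj => lt_of_le_of_lt (hblo i hi) (hbQ j hj))
      (fun i hi => ne_top_of_lt (lt_of_le_of_lt (hblo i hi) (lt_top_iff_ne_top.2 hμtop)))
  have hCA : ((B a : ℤ) : WithTop ℤ) ≤ vK π c + Tsum π r a := by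
    have := hcoeff a (by omega)
    rwa [vK_mul hπ, hEA] at this
  have hCB : ((B b : ℤ) : WithTop ℤ) ≤ vK π c + Tsum π r b := by
    have := hcoeff b hbD
    rwa [vK_mul hπ, hEB] at this
  -- extract integers
  obtain ⟨vc, hvc⟩ : ∃ vc : ℤ, vK π c = (vc : WithTop ℤ) :=
    Option.ne_none_iff_exists'.1 (vK_ne_top hπ hc)
  obtain ⟨μz, hμz⟩ : ∃ μz : ℤ, μ = (μz : WithTop ℤ) := Option.ne_none_iff_exists'.1 hμtop
  have hTafin : Tsum π r a ≠ ⊤ := by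
    rw [Ne, Tsum, WithTop.sum_eq_top]
    rintro ⟨i, hi, hit⟩
    simp only [Finset.mem_filter] at hi
    exact ne_top_of_lt (halo i hi.2) hit
  obtain ⟨Ta, hTa⟩ : ∃ Ta : ℤ, Tsum π r a = (Ta : WithTop ℤ) :=
    Option.ne_none_iff_exists'.1 hTafin
  have hTk : Tsum π r k = Tsum π r a + (k - a) • μ :=
    Tsum_split hπ r (by omega) hk (fun i h1 h2 => hplat i h1 (by omega))
  have hTb : Tsum π r b = Tsum π r a + (b - a) • μ :=
    Tsum_split hπ r (by omega) hbD hplat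
  -- to ℤ
  have hCAz : B a ≤ vc + Ta := by
    rw [hvc, hTa] at hCA
    exact_mod_cast hCA
  have hCBz : B b ≤ vc + Ta + ((b : ℤ) - a) * μz := by
    rw [hvc, hTb, hTa, hμz] at hCB
    have : ((vc : WithTop ℤ) + ((Ta : ℤ) + (b - a) • (μz : WithTop ℤ)))
        = ((vc + Ta + ((b : ℤ) - a) * μz : ℤ) : WithTop ℤ) := by
      rw [← WithTop.coe_nsmul, ← WithTop.coe_add, ← WithTop.coe_add]
      congr 1
      rw [nsmul_eq_mul]
      push_cast [(by omega : a ≤ b)]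
      ring
    rw [this] at hCB
    exact_mod_cast hCB
  have hinterp := hB a k b (by omega) hkb hbD
  have hgoal : (B k : ℤ) ≤ vc + Ta + ((k : ℤ) - a) * μz := by
    have hba : (0 : ℤ) < (b : ℤ) - a := by
      have : a < b := by omega
      omega
    have h1 : ((b : ℤ) - k) * B a ≤ ((b : ℤ) - k) * (vc + Ta) :=
      mul_le_mul_of_nonneg_left hCAz (by omega)
    have h2 : ((k : ℤ) - a) * B b ≤ ((k : ℤ) - a) * (vc + Ta + ((b : ℤ) - a) * μz) :=
      mul_le_mul_of_nonneg_left hCBz (by omega)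
    have hkey : ((b : ℤ) - a) * B k ≤ ((b : ℤ) - a) * (vc + Ta + ((k : ℤ) - a) * μz) := by
      calc ((b : ℤ) - a) * B k ≤ ((b : ℤ) - k) * B a + ((k : ℤ) - a) * B b := hinterp
      _ ≤ ((b : ℤ) - k) * (vc + Ta) + ((k : ℤ) - a) * (vc + Ta + ((b : ℤ) - a) * μz) := by
          exact add_le_add h1 h2
      _ = ((b : ℤ) - a) * (vc + Ta + ((k : ℤ) - a) * μz) := by ring
    exact le_of_mul_le_mul_left hkey hba
  rw [hvc, hTk, hTa, hμz]
  have : ((vc : WithTop ℤ) + ((Ta : ℤ) + (k - a) • (μz : WithTop ℤ)))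
      = ((vc + Ta + ((k : ℤ) - a) * μz : ℤ) : WithTop ℤ) := by
    rw [← WithTop.coe_nsmul, ← WithTop.coe_add, ← WithTop.coe_add]
    congr 1
    rw [nsmul_eq_mul]
    push_cast [(by omega : a ≤ k)]
    ring
  rw [this]
  exact_mod_cast hgoal

end NP2
section Coeff

variable {O_K : Type*} [CommRing O_K] [IsDomain O_K] [IsDiscreteValuationRing O_K]

lemma half_bounds (L : ℕ) : L ≤ 2 * ((L + 1) / 2) ∧ 2 * ((L + 1) / 2) ≤ L + 1 := by omega

lemma coeff_div (π : O_K) (n d e : ℕ) (hn : 1 ≤ n) (hd : 1 ≤ d) (he : 1 ≤ e)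
    (he_odd : Odd e) (he_le : e ≤ 2 * d - 1)
    (b : Fin (d + 1) → O_K) (a : Fin (2 * d + 1) → O_K)
    (hb : ∀ j : Fin (d + 1), 2 * (j : ℕ) < e → π ^ ((n * e + 1) / 2 - n * j) ∣ b j)
    (ha : ∀ j : Fin (2 * d + 1), (j : ℕ) ≤ e → π ^ (n * e - n * j) ∣ a j)
    (Q P F : Polynomial O_K)
    (hQ : Q = ∑ j : Fin (d + 1), Polynomial.C (b j) * Polynomial.X ^ (j : ℕ))
    (hP : P = ∑ j : Fin (2 * d + 1), Polynomial.C (a j) * Polynomial.X ^ (j : ℕ))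
    (hF : F = 4 * P + Q ^ 2) :
    ∀ j : ℕ, j ≤ e → π ^ (n * e - n * j) ∣ F.coeff j := by
  intro j hj
  obtain ⟨w, hw⟩ := he_odd
  have hj2d : j ≤ 2 * d := by omega
  have hQc : ∀ i : ℕ, (hi : i ≤ d) → Q.coeff i = b ⟨i, by omega⟩ := by
    intro i hi
    rw [hQ, Polynomial.finset_sum_coeff]
    simp only [Polynomial.coeff_C_mul, Polynomial.coeff_X_pow, mul_ite, mul_one, mul_zero]
    rw [Finset.sum_eq_single (⟨i, by omega⟩ : Fin (d + 1))]
    · simp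
    · intro jj _ hjj
      rw [if_neg]
      intro hc
      exact hjj (Fin.ext (by simpa using hc.symm))
    · intro hmem
      exact absurd (Finset.mem_univ _) hmem
  have hQc0 : ∀ i : ℕ, d < i → Q.coeff i = 0 := by
    intro i hi
    rw [hQ, Polynomial.finset_sum_coeff]
    apply Finset.sum_eq_zero
    intro jj _
    simp only [Polynomial.coeff_C_mul, Polynomial.coeff_X_pow, mul_ite, mul_one, mul_zero]
    rw [if_neg]
    intro hc
    have := jj.2
    omega
  have hPc : P.coeff j = a ⟨j, by omega⟩ := by
    rw [hP, Polynomial.finset_sum_coeff]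
    simp only [Polynomial.coeff_C_mul, Polynomial.coeff_X_pow, mul_ite, mul_one, mul_zero]
    rw [Finset.sum_eq_single (⟨j, by omega⟩ : Fin (2 * d + 1))]
    · simp
    · intro jj _ hjj
      rw [if_neg]
      intro hc
      exact hjj (Fin.ext (by simpa using hc.symm))
    · intro hmem
      exact absurd (Finset.mem_univ _) hmem
  have h4 : (4 : Polynomial O_K) * P = Polynomial.C (4 : O_K) * P := by
    congr 1
  have hFc : F.coeff j = 4 * P.coeff j + (Q * Q).coeff j := by
    rw [hF, pow_two, Polynomial.coeff_add, h4, Polynomial.coeff_C_mul]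
  rw [hFc]
  apply dvd_add
  · rw [hPc]
    exact Dvd.dvd.mul_left (ha ⟨j, by omega⟩ hj) 4
  · rw [Polynomial.coeff_mul]
    apply Finset.dvd_sum
    intro x hx
    have hik : x.1 + x.2 = j := Finset.HasAntidiagonal.mem_antidiagonal.1 hx
    by_cases hx1 : d < x.1
    · rw [hQc0 x.1 hx1, zero_mul]
      exact dvd_zero _
    by_cases hx2 : d < x.2
    · rw [hQc0 x.2 hx2, mul_zero]
      exact dvd_zero _
    push_neg at hx1 hx2
    rw [hQc x.1 hx1, hQc x.2 hx2]
    have hhalf := half_bounds (n * e)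
    set q := (n * e + 1) / 2 with hqdef
    have hq1 : (n * e : ℤ) ≤ 2 * q := by exact_mod_cast hhalf.1
    have hnj : (n * j : ℤ) = n * x.1 + n * x.2 := by
      have : n * j = n * x.1 + n * x.2 := by rw [← hik]; ring
      exact_mod_cast this
    have hnje : n * j ≤ n * e := Nat.mul_le_mul_left n hj
    by_cases hc1 : 2 * x.1 < e
    · have hle1 : 2 * (n * x.1) ≤ n * e := by
        calc 2 * (n * x.1) = n * (2 * x.1) := by ring
        _ ≤ n * e := Nat.mul_le_mul_left n (by omega)
      have hiq : n * x.1 ≤ q := by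
        refine Nat.le_of_mul_le_mul_left ?_ (show 0 < 2 by norm_num)
        calc 2 * (n * x.1) ≤ n * e := hle1
        _ ≤ 2 * q := hhalf.1
      have d1 := hb ⟨x.1, by omega⟩ hc1
      simp only [Fin.val_mk] at d1
      by_cases hc2 : 2 * x.2 < e
      · -- both small
        have hle2 : 2 * (n * x.2) ≤ n * e := by
          calc 2 * (n * x.2) = n * (2 * x.2) := by ring
          _ ≤ n * e := Nat.mul_le_mul_left n (by omega)
        have hkq : n * x.2 ≤ q := by
          refine Nat.le_of_mul_le_mul_left ?_ (show 0 < 2 by norm_num)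
          calc 2 * (n * x.2) ≤ n * e := hle2
          _ ≤ 2 * q := hhalf.1
        have d2 := hb ⟨x.2, by omega⟩ hc2
        simp only [Fin.val_mk] at d2
        refine dvd_trans (pow_dvd_pow π (show n * e - n * j ≤ (q - n * x.1) + (q - n * x.2)
          from ?_)) (by rw [pow_add]; exact mul_dvd_mul d1 d2)
        zify [hiq, hkq, hnje]
        linarith
      · -- x.2 big
        have hbig : e + 1 ≤ 2 * x.2 := by omega
        have hc3 : (n : ℤ) * (e + 1) ≤ 2 * (n * x.2) := by
          have : n * (e + 1) ≤ n * (2 * x.2) := Nat.mul_le_mul_left n hbig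
          have h2 : (n * (e + 1) : ℤ) ≤ n * (2 * x.2) := by exact_mod_cast this
          linarith
        refine dvd_trans (pow_dvd_pow π (show n * e - n * j ≤ q - n * x.1 from ?_))
          (d1.mul_right _)
        zify [hiq, hnje]
        have hn1 : (0 : ℤ) ≤ n := by positivity
        linarith
    · -- x.1 big, so x.2 small
      have hbig : e + 1 ≤ 2 * x.1 := by omega
      have hc2 : 2 * x.2 < e := by omega
      have hle2 : 2 * (n * x.2) ≤ n * e := by
        calc 2 * (n * x.2) = n * (2 * x.2) := by ring
        _ ≤ n * e := Nat.mul_le_mul_left n (by omega)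
      have hkq : n * x.2 ≤ q := by
        refine Nat.le_of_mul_le_mul_left ?_ (show 0 < 2 by norm_num)
        calc 2 * (n * x.2) ≤ n * e := hle2
        _ ≤ 2 * q := hhalf.1
      have d2 := hb ⟨x.2, by omega⟩ hc2
      simp only [Fin.val_mk] at d2
      have hc3 : (n : ℤ) * (e + 1) ≤ 2 * (n * x.1) := by
        have : n * (e + 1) ≤ n * (2 * x.1) := Nat.mul_le_mul_left n hbig
        have h2 : (n * (e + 1) : ℤ) ≤ n * (2 * x.1) := by exact_mod_cast this
        linarith
      refine dvd_trans (pow_dvd_pow π (show n * e - n * j ≤ q - n * x.2 from ?_))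
        (d2.mul_left _)
      zify [hkq, hnje]
      have hn1 : (0 : ℤ) ≤ n := by positivity
      linarith

end Coeff
section Pair

lemma bridge {D : ℕ} {M : Type*} [AddCommMonoid M] (h : Fin D → Fin D → M) :
    ∑ i : Fin D, ∑ j ∈ Finset.univ.filter (fun j => i < j), h i j
    = ∑ p ∈ (Finset.univ ×ˢ Finset.univ).filter
        (fun p : Fin D × Fin D => p.1 < p.2), h p.1 p.2 := by
  classical
  symm
  calc ∑ p ∈ (Finset.univ ×ˢ Finset.univ).filter (fun p : Fin D × Fin D => p.1 < p.2), h p.1 p.2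
      = ∑ p ∈ (Finset.univ ×ˢ Finset.univ : Finset (Fin D × Fin D)),
          (if p.1 < p.2 then h p.1 p.2 else 0) := Finset.sum_filter _ _
    _ = ∑ i : Fin D, ∑ j : Fin D, if i < j then h i j else 0 := Finset.sum_product _ _ _
    _ = ∑ i : Fin D, ∑ j ∈ Finset.univ.filter (fun j => i < j), h i j := by
        apply Finset.sum_congr rfl; intro i _; rw [Finset.sum_filter]

lemma pairsum_perm {D : ℕ} {M : Type*} [AddCommMonoid M] (h : Fin D → Fin D → M)
    (hsymm : ∀ i j, h i j = h j i) (σ : Equiv.Perm (Fin D)) :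
    ∑ i : Fin D, ∑ j ∈ Finset.univ.filter (fun j => i < j), h (σ i) (σ j)
    = ∑ i : Fin D, ∑ j ∈ Finset.univ.filter (fun j => i < j), h i j := by
  classical
  rw [bridge, bridge]
  refine Finset.sum_nbij'
    (fun p => if σ p.1 < σ p.2 then (σ p.1, σ p.2) else (σ p.2, σ p.1))
    (fun q => if σ.symm q.1 < σ.symm q.2 then (σ.symm q.1, σ.symm q.2)
      else (σ.symm q.2, σ.symm q.1)) ?_ ?_ ?_ ?_ ?_
  · intro p hp
    rw [Finset.mem_filter] at hp
    have hne : σ p.1 ≠ σ p.2 := fun hh => absurd (σ.injective hh) (ne_of_lt hp.2)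
    split_ifs with hlt
    · simp [Finset.mem_filter, hlt]
    · simp [Finset.mem_filter, lt_of_le_of_ne (not_lt.1 hlt) (Ne.symm hne)]
  · intro q hq
    rw [Finset.mem_filter] at hq
    have hne : σ.symm q.1 ≠ σ.symm q.2 := fun hh =>
      absurd (σ.symm.injective hh) (ne_of_lt hq.2)
    split_ifs with hlt
    · simp [Finset.mem_filter, hlt]
    · simp [Finset.mem_filter, lt_of_le_of_ne (not_lt.1 hlt) (Ne.symm hne)]
  · intro p hp
    rw [Finset.mem_filter] at hp
    have hlt := hp.2
    by_cases h1 : σ p.1 < σ p.2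
    · rw [if_pos h1]
      dsimp only
      rw [Equiv.symm_apply_apply, Equiv.symm_apply_apply, if_pos hlt]
    · rw [if_neg h1]
      dsimp only
      rw [Equiv.symm_apply_apply, Equiv.symm_apply_apply, if_neg (lt_asymm hlt)]
  · intro q hq
    rw [Finset.mem_filter] at hq
    have hlt := hq.2
    by_cases h1 : σ.symm q.1 < σ.symm q.2
    · rw [if_pos h1]
      dsimp only
      rw [Equiv.apply_symm_apply, Equiv.apply_symm_apply, if_pos hlt]
    · rw [if_neg h1]
      dsimp only
      rw [Equiv.apply_symm_apply, Equiv.apply_symm_apply, if_neg (lt_asymm hlt)]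
  · intro p hp
    split_ifs with h1
    · rfl
    · exact hsymm _ _

end Pair

/-- Let `O_K` be a DVR with fraction field `K` and uniformizer `π`. Fix
`n, d ≥ 1` and an odd `e` with `1 ≤ e ≤ 2d − 1`; set `λ = n·e`. If
`Q = Σ b_j x^j`, `P = Σ a_j x^j ∈ O_K[x]` satisfy `ν(b_j) ≥ ⌈λ/2⌉ − nj` for `j ≤ (e−1)/2`
and `ν(a_j) ≥ λ − nj` for `j ≤ e`, and `F = 4P + Q²` has degree exactly `2d` and splits
over `K` with roots `r`, then `ν(disc F) ≥ n·e·(e−1)`. -/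
theorem statement1 (O_K : Type*) [CommRing O_K] [IsDomain O_K] [IsDiscreteValuationRing O_K]
    (K : Type*) [Field K] [Algebra O_K K] [IsFractionRing O_K K]
    (π : O_K) (hπ : Irreducible π)
    (n d e : ℕ) (hn : 1 ≤ n) (hd : 1 ≤ d) (he : 1 ≤ e) (he_odd : Odd e)
    (he_le : e ≤ 2 * d - 1)
    (b : Fin (d + 1) → O_K) (a : Fin (2 * d + 1) → O_K)
    (hb : ∀ j : Fin (d + 1), 2 * (j : ℕ) < e → π ^ ((n * e + 1) / 2 - n * j) ∣ b j)
    (ha : ∀ j : Fin (2 * d + 1), (j : ℕ) ≤ e → π ^ (n * e - n * j) ∣ a j)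
    (Q P F : Polynomial O_K)
    (hQ : Q = ∑ j : Fin (d + 1), Polynomial.C (b j) * Polynomial.X ^ (j : ℕ))
    (hP : P = ∑ j : Fin (2 * d + 1), Polynomial.C (a j) * Polynomial.X ^ (j : ℕ))
    (hF : F = 4 * P + Q ^ 2)
    (hdeg : F.natDegree = 2 * d)
    (r : Fin (2 * d) → K)
    (hsplit : F.map (algebraMap O_K K) =
      Polynomial.C (algebraMap O_K K F.leadingCoeff) *
        ∏ i : Fin (2 * d), (Polynomial.X - Polynomial.C (r i))) :
    ∃ w : O_K,
      discOfRoots (2 * d) (algebraMap O_K K F.leadingCoeff) r =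
        algebraMap O_K K (π ^ (n * e * (e - 1)) * w) := by
  classical
  have hFne : F ≠ 0 := by
    intro h
    rw [h, Polynomial.natDegree_zero] at hdeg
    omega
  have hlc : F.leadingCoeff ≠ 0 := Polynomial.leadingCoeff_ne_zero.mpr hFne
  set c' : K := algebraMap O_K K F.leadingCoeff with hc'def
  have hc' : c' ≠ 0 := phi_ne_zero hlc
  set g : Fin (2 * d) → K := fun i => -(r i) with hgdef
  set mf : Fin (2 * d) → WithTop ℤ := fun i => vK π (r i) with hmfdef
  set σ : Equiv.Perm (Fin (2 * d)) := Tuple.sort mf with hσdef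
  have hmono : Monotone (fun i => mf (σ i)) := Tuple.monotone_sort mf
  set g' : Fin (2 * d) → K := fun i => g (σ i) with hg'def
  have hms_eq : ∀ i, vK π (g' i) = mf (σ i) := fun i => vK_neg hπ _
  have hmonog : Monotone (fun i => vK π (g' i)) := by
    have h0 : (fun i => vK π (g' i)) = fun i => mf (σ i) := funext hms_eq
    rw [h0]; exact hmono
  set Bf : ℕ → ℤ := fun t => max 0 ((n : ℤ) * e - n * (2 * d) + n * t) with hBfdef
  -- interpolation property of Bf
  have hBkey : ∀ a' k b' : ℕ, a' ≤ k → k ≤ b' → b' ≤ 2 * d →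
      ((b' : ℤ) - a') * Bf k ≤ ((b' : ℤ) - k) * Bf a' + ((k : ℤ) - a') * Bf b' := by
    intro a' k b' h1 h2 _
    have ha0 : (0 : ℤ) ≤ (b' : ℤ) - k := by
      have : (k : ℤ) ≤ b' := by exact_mod_cast h2
      linarith
    have hb0 : (0 : ℤ) ≤ (k : ℤ) - a' := by
      have : (a' : ℤ) ≤ k := by exact_mod_cast h1
      linarith
    simp only [hBfdef]
    rcases max_cases (0 : ℤ) ((n : ℤ) * e - n * (2 * d) + n * k) with ⟨hmax, _⟩ | ⟨hmax, _⟩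
    · rw [hmax, mul_zero]
      exact add_nonneg (mul_nonneg ha0 (le_max_left _ _)) (mul_nonneg hb0 (le_max_left _ _))
    · rw [hmax]
      calc ((b' : ℤ) - a') * ((n : ℤ) * e - n * (2 * d) + n * k)
          = ((b' : ℤ) - k) * ((n : ℤ) * e - n * (2 * d) + n * a')
            + ((k : ℤ) - a') * ((n : ℤ) * e - n * (2 * d) + n * b') := by ring
        _ ≤ _ := add_le_add (mul_le_mul_of_nonneg_left (le_max_right _ _) ha0)
            (mul_le_mul_of_nonneg_left (le_max_right _ _) hb0)
  have hcard_univ : #(Finset.univ : Finset (Fin (2 * d))) = 2 * d := by simp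
  -- coefficients of F via roots
  have hcoeffφ : ∀ k, k ≤ 2 * d →
      algebraMap O_K K (F.coeff (2 * d - k)) = c' * Esym g k := by
    intro k hk
    rw [← Polynomial.coeff_map, hsplit, Polynomial.coeff_C_mul]
    congr 1
    have hprod : ∏ i : Fin (2 * d), (Polynomial.X - Polynomial.C (r i))
        = ∏ i : Fin (2 * d), (Polynomial.X + Polynomial.C (g i)) := by
      apply Finset.prod_congr rfl
      intro i _
      rw [hgdef]
      rw [sub_eq_add_neg, ← map_neg]
    rw [hprod, Finset.prod_X_add_C_coeff Finset.univ g (by rw [hcard_univ]; omega)]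
    unfold Esym
    rw [hcard_univ, show 2 * d - (2 * d - k) = k by omega]
  -- lower bounds for coefficient valuations
  have hcoeffNP : ∀ k, k ≤ 2 * d → ((Bf k : ℤ) : WithTop ℤ) ≤ vK π (c' * Esym g' k) := by
    intro k hk
    have hperm : Esym g' k = Esym g k := by
      rw [hg'def]
      exact Esym_perm g σ k
    rw [hperm, ← hcoeffφ k hk]
    rcases le_or_gt ((n : ℤ) * e - n * (2 * d) + n * k) 0 with hL | hL
    · have hBk : Bf k = 0 := by simp only [hBfdef]; exact max_eq_left hL
      rw [hBk]
      simpa using vK_algebraMap_nonneg hπ (F.coeff (2 * d - k))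
    · have hn0 : (0 : ℤ) < n := by exact_mod_cast hn
      have hek : 2 * d < e + k := by
        by_contra hcon
        push_neg at hcon
        have hcon2 : (e : ℤ) + k ≤ 2 * d := by exact_mod_cast hcon
        nlinarith
      have hje : 2 * d - k ≤ e := by omega
      have hdvd := coeff_div π n d e hn hd he he_odd he_le b a hb ha Q P F hQ hP hF
        (2 * d - k) hje
      have hv := vK_algebraMap_dvd (K := K) hπ hdvd
      have hBfk : Bf k = ((n * e - n * (2 * d - k) : ℕ) : ℤ) := by
        have hj1 : n * (2 * d - k) ≤ n * e := Nat.mul_le_mul_left n hje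
        simp only [hBfdef]
        rw [max_eq_right hL.le]
        push_cast [hj1, hk]
        ring
      rw [hBfk]
      exact hv
  -- Newton polygon conclusion
  have hNP := NP_main hπ c' hc' g' hmonog Bf hBkey hcoeffNP
  -- valuation of the discriminant
  have hdisc_eq : vK π (discOfRoots (2 * d) c' r)
      = (2 * (2 * d) - 2) • vK π c' + ∑ i : Fin (2 * d),
          ∑ j ∈ Finset.univ.filter (fun j => i < j), 2 • vK π (r i - r j) := by
    unfold discOfRoots
    rw [vK_mul hπ, vK_pow hπ, vK_prod hπ]
    congr 1
    apply Finset.sum_congr rfl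
    intro i _
    rw [vK_prod hπ]
    apply Finset.sum_congr rfl
    intro j _
    rw [vK_pow hπ]
  have hminb : ∀ i j : Fin (2 * d), 2 • min (mf i) (mf j) ≤ 2 • vK π (r i - r j) := by
    intro i j
    have h1 : min (mf i) (mf j) ≤ vK π (r i - r j) := by
      have h2 := vK_add hπ (r i) (-(r j))
      rw [vK_neg hπ] at h2
      rw [sub_eq_add_neg]
      exact h2
    rw [two_nsmul, two_nsmul]
    exact add_le_add h1 h1
  have hstep1 : ∑ i : Fin (2 * d), ∑ j ∈ Finset.univ.filter (fun j => i < j),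
        2 • min (mf i) (mf j)
      ≤ ∑ i : Fin (2 * d), ∑ j ∈ Finset.univ.filter (fun j => i < j),
        2 • vK π (r i - r j) :=
    Finset.sum_le_sum fun i _ => Finset.sum_le_sum fun j _ => hminb i j
  have hstep2 : ∑ i : Fin (2 * d), ∑ j ∈ Finset.univ.filter (fun j => i < j),
        2 • min (mf (σ i)) (mf (σ j))
      = ∑ i : Fin (2 * d), ∑ j ∈ Finset.univ.filter (fun j => i < j),
        2 • min (mf i) (mf j) :=
    pairsum_perm (fun i j => 2 • min (mf i) (mf j)) (fun i j => by rw [min_comm]) σ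
  have hstep3 : ∀ i : Fin (2 * d), ∑ j ∈ Finset.univ.filter (fun j => i < j),
      2 • min (mf (σ i)) (mf (σ j)) = (2 * d - ((i : ℕ) + 1)) • (2 • mf (σ i)) := by
    intro i
    have hfe : Finset.univ.filter (fun j : Fin (2 * d) => i < j)
        = Finset.univ.filter (fun j : Fin (2 * d) => ((i : ℕ) + 1) ≤ (j : ℕ) ∧ (j : ℕ) < 2 * d) := by
      ext j
      simp only [Finset.mem_filter, Finset.mem_univ, true_and, Fin.lt_def]
      have := j.2
      omega
    calc ∑ j ∈ Finset.univ.filter (fun j => i < j), 2 • min (mf (σ i)) (mf (σ j))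
        = ∑ j ∈ Finset.univ.filter (fun j => i < j), 2 • mf (σ i) := by
          refine Finset.sum_congr rfl fun j hj => ?_
          rw [min_eq_left (hmono (le_of_lt (Finset.mem_filter.1 hj).2))]
      _ = #(Finset.univ.filter (fun j : Fin (2 * d) => i < j)) • (2 • mf (σ i)) :=
          Finset.sum_const _
      _ = (2 * d - ((i : ℕ) + 1)) • (2 • mf (σ i)) := by
          rw [hfe, card_filter_ico ((i : ℕ) + 1) (2 * d) le_rfl]
  have hstep4 : ∑ t ∈ Finset.Ico 1 (2 * d), ∑ i ∈ Finset.univ.filter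
        (fun i : Fin (2 * d) => (i : ℕ) < t), mf (σ i)
      = ∑ i : Fin (2 * d), (2 * d - ((i : ℕ) + 1)) • mf (σ i) := by
    calc ∑ t ∈ Finset.Ico 1 (2 * d), ∑ i ∈ Finset.univ.filter
          (fun i : Fin (2 * d) => (i : ℕ) < t), mf (σ i)
        = ∑ t ∈ Finset.Ico 1 (2 * d), ∑ i : Fin (2 * d),
            if (i : ℕ) < t then mf (σ i) else 0 := by
          exact Finset.sum_congr rfl fun t _ => Finset.sum_filter _ _
      _ = ∑ i : Fin (2 * d), ∑ t ∈ Finset.Ico 1 (2 * d),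
            if (i : ℕ) < t then mf (σ i) else 0 := Finset.sum_comm
      _ = ∑ i : Fin (2 * d), ∑ t ∈ (Finset.Ico 1 (2 * d)).filter
            (fun t => (i : ℕ) < t), mf (σ i) := by
          exact Finset.sum_congr rfl fun i _ => (Finset.sum_filter _ _).symm
      _ = ∑ i : Fin (2 * d), (2 * d - ((i : ℕ) + 1)) • mf (σ i) := by
          refine Finset.sum_congr rfl fun i _ => ?_
          rw [Finset.sum_const]
          congr 1
          have hh : (Finset.Ico 1 (2 * d)).filter (fun t => (i : ℕ) < t)
              = Finset.Ico ((i : ℕ) + 1) (2 * d) := by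
            ext t
            simp only [Finset.mem_filter, Finset.mem_Ico]
            omega
          rw [hh, Nat.card_Ico]
  have hIco : ∑ t ∈ Finset.Ico 1 (2 * d), (vK π c' + Tsum π g' t)
      = (2 * d - 1) • vK π c' + ∑ i : Fin (2 * d), (2 * d - ((i : ℕ) + 1)) • mf (σ i) := by
    rw [Finset.sum_add_distrib, Finset.sum_const, Nat.card_Ico, ← hstep4]
    congr 1
    refine Finset.sum_congr rfl fun t _ => ?_
    unfold Tsum
    exact Finset.sum_congr rfl fun i _ => hms_eq i
  have h2smul_le : ∀ x y : WithTop ℤ, x ≤ y → 2 • x ≤ 2 • y := fun x y h => by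
    rw [two_nsmul, two_nsmul]; exact add_le_add h h
  have hchain : 2 • ∑ t ∈ Finset.Ico 1 (2 * d), ((Bf t : ℤ) : WithTop ℤ)
      ≤ vK π (discOfRoots (2 * d) c' r) := by
    rw [hdisc_eq]
    refine le_trans (h2smul_le _ _ (Finset.sum_le_sum fun t ht =>
      hNP t (le_of_lt (Finset.mem_Ico.1 ht).2))) ?_
    rw [hIco]
    have hLHS : 2 • ((2 * d - 1) • vK π c'
          + ∑ i : Fin (2 * d), (2 * d - ((i : ℕ) + 1)) • mf (σ i))
        = (2 * (2 * d) - 2) • vK π c' + ∑ i : Fin (2 * d),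
            ∑ j ∈ Finset.univ.filter (fun j => i < j), 2 • min (mf i) (mf j) := by
      rw [smul_add, smul_smul, show 2 * (2 * d - 1) = 2 * (2 * d) - 2 by omega]
      congr 1
      rw [Finset.smul_sum, ← hstep2]
      refine Finset.sum_congr rfl fun i _ => ?_
      rw [hstep3 i, smul_comm]
    rw [hLHS]
    exact add_le_add_right hstep1 _
  -- numeric lower bound for the Bf-sum
  have hg1 : ∑ t ∈ Finset.Ico (2 * d - e + 1) (2 * d), Bf t
      ≤ ∑ t ∈ Finset.Ico 1 (2 * d), Bf t := by
    refine Finset.sum_le_sum_of_subset_of_nonneg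
      (Finset.Ico_subset_Ico (by omega) le_rfl) fun t _ _ => ?_
    simp only [hBfdef]
    exact le_max_left _ _
  have hg2 : ∑ t ∈ Finset.Ico (2 * d - e + 1) (2 * d), Bf t
      = ∑ s ∈ Finset.Ico 1 e, ((n : ℤ) * s) := by
    refine Finset.sum_nbij' (fun t => t - (2 * d - e)) (fun s => s + (2 * d - e))
      ?_ ?_ ?_ ?_ ?_
    · intro t ht
      rw [Finset.mem_Ico] at ht ⊢
      omega
    · intro s hs
      rw [Finset.mem_Ico] at hs ⊢
      omega
    · intro t ht
      rw [Finset.mem_Ico] at ht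
      omega
    · intro s hs
      rw [Finset.mem_Ico] at hs
      omega
    · intro t ht
      rw [Finset.mem_Ico] at ht
      simp only [hBfdef]
      have hpos : (0 : ℤ) ≤ (n : ℤ) * ((t : ℤ) - 2 * d + e) := by
        refine mul_nonneg (by positivity) ?_
        have h1 : 2 * d - e + 1 ≤ t := ht.1
        push_cast
        omega
      have hring : (n : ℤ) * e - n * (2 * d) + n * t = n * ((t : ℤ) - 2 * d + e) := by ring
      rw [hring, max_eq_right hpos]
      have hcast : ((t - (2 * d - e) : ℕ) : ℤ) = (t : ℤ) - 2 * d + e := by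
        have h1 : 2 * d - e ≤ t := by omega
        push_cast [h1, (show e ≤ 2 * d by omega)]
        ring
      rw [hcast]
  have hg3 : ∑ s ∈ Finset.Ico 1 e, ((n : ℤ) * s)
      = (n : ℤ) * ((∑ s ∈ Finset.range e, s : ℕ) : ℤ) := by
    rw [← Finset.mul_sum]
    congr 1
    have h0 : Finset.range e = insert 0 (Finset.Ico 1 e) := by
      ext t
      simp only [Finset.mem_range, Finset.mem_insert, Finset.mem_Ico]
      omega
    push_cast
    rw [h0, Finset.sum_insert (by simp)]
    simp
  have hgauss := Finset.sum_range_id_mul_two e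
  have hfinal : ((n * e * (e - 1) : ℕ) : ℤ) ≤ 2 * ∑ t ∈ Finset.Ico 1 (2 * d), Bf t := by
    have hc1 : ((n * e * (e - 1) : ℕ) : ℤ) = (n : ℤ) * ((e : ℤ) * ((e : ℤ) - 1)) := by
      push_cast [he]
      ring
    have hc2 : (((∑ s ∈ Finset.range e, s : ℕ)) : ℤ) * 2 = (e : ℤ) * ((e : ℤ) - 1) := by
      have h3 : ((∑ s ∈ Finset.range e, s : ℕ) : ℤ) * 2 = ((e * (e - 1) : ℕ) : ℤ) := by
        exact_mod_cast hgauss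
      rw [h3]
      push_cast [he]
      ring
    have h5 : 2 * ((n : ℤ) * ((∑ s ∈ Finset.range e, s : ℕ) : ℤ))
        = (n : ℤ) * ((e : ℤ) * ((e : ℤ) - 1)) := by
      rw [← hc2]; ring
    rw [hc1, ← h5, ← hg3, ← hg2]
    linarith
  -- put it together
  have hcoe : 2 • ∑ t ∈ Finset.Ico 1 (2 * d), ((Bf t : ℤ) : WithTop ℤ)
      = ((2 * ∑ t ∈ Finset.Ico 1 (2 * d), Bf t : ℤ) : WithTop ℤ) := by
    have h1 : ∑ t ∈ Finset.Ico 1 (2 * d), ((Bf t : ℤ) : WithTop ℤ)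
        = ((∑ t ∈ Finset.Ico 1 (2 * d), Bf t : ℤ) : WithTop ℤ) := by
      push_cast
      rfl
    rw [h1, ← WithTop.coe_nsmul]
    congr 1 <;> simp [nsmul_eq_mul]
  have hval : (((n * e * (e - 1) : ℕ) : ℤ) : WithTop ℤ)
      ≤ vK π (discOfRoots (2 * d) c' r) := by
    refine le_trans ?_ hchain
    rw [hcoe]
    exact_mod_cast hfinal
  -- extract the witness
  rcases eq_or_ne (discOfRoots (2 * d) c' r) 0 with hz | hz
  · exact ⟨0, by rw [hz, mul_zero, map_zero]⟩
  set M := n * e * (e - 1) with hMdef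
  set p : K := algebraMap O_K K π with hpdef
  have hp0 : p ≠ 0 := phi_pi_ne_zero hπ
  have hppow : vK π (p ^ M) = ((M : ℤ) : WithTop ℤ) := by
    rw [vK_pow hπ, hpdef, vK_pi hπ]
    rw [show (1 : WithTop ℤ) = ((1 : ℤ) : WithTop ℤ) from rfl, ← WithTop.coe_nsmul]
    congr 1 <;> simp [nsmul_eq_mul]
  have hdiv : discOfRoots (2 * d) c' r = (discOfRoots (2 * d) c' r / p ^ M) * p ^ M := by
    field_simp
  have hvq : 0 ≤ vK π (discOfRoots (2 * d) c' r / p ^ M) := by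
    rcases eq_or_ne (vK π (discOfRoots (2 * d) c' r / p ^ M)) ⊤ with ht | ht
    · rw [ht]; exact le_top
    obtain ⟨z, hzq⟩ : ∃ z : ℤ, vK π (discOfRoots (2 * d) c' r / p ^ M)
        = ((z : ℤ) : WithTop ℤ) := Option.ne_none_iff_exists'.1 ht
    rw [hzq]
    have h7 := hval
    rw [hdiv, vK_mul hπ, hppow, hzq] at h7
    have h9 : (M : ℤ) ≤ z + M := by exact_mod_cast h7
    exact_mod_cast (by omega : (0 : ℤ) ≤ z)
  obtain ⟨u, hu⟩ := vK_of_nonneg hπ hvq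
  refine ⟨u, ?_⟩
  rw [map_mul, map_pow, hu, ← hpdef, mul_comm (p ^ M)]
  exact (div_mul_cancel₀ _ (pow_ne_zero M hp0)).symm
end

section
/- Let K be a field equipped with a nonarchimedean absolute value |·|. Let F₀, F₁ ∈ K[x] be nonconstant polynomials of degrees d₀, d₁ and leading coefficients c₀, c₁, both of which split over K. Assume that |α| > |β| for every root α of F₀ and every root β of F₁. Then |disc(F₀F₁)| = |c₁|^{2d₀} · |F₀(0)|^{2d₁} · |disc(F₀)| · |disc(F₁)|. -/
open Polynomial

lemma ultra_sub {K : Type*} [Field K] (v : AbsoluteValue K ℝ)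
    (hna : ∀ x y : K, v (x + y) ≤ max (v x) (v y))
    {a b : K} (h : v b < v a) : v (a - b) = v a := by
  have h1 : v (a - b) ≤ v a := by
    have := hna a (-b)
    simpa [sub_eq_add_neg, max_eq_left h.le] using this
  have h2 : v a ≤ v (a - b) := by
    have := hna (a - b) b
    simp only [sub_add_cancel] at this
    rcases le_max_iff.mp this with h' | h'
    · exact h'
    · exact absurd h' (not_le.mpr h)
  exact le_antisymm h1 h2

lemma prod_pairs_append {K M : Type*} [CommMonoid M] (m n : ℕ)
    (f : K → K → M) (α : Fin m → K) (β : Fin n → K) :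
    (∏ i : Fin (m + n), ∏ j ∈ Finset.univ.filter (fun j => i < j),
        f (Fin.append α β i) (Fin.append α β j)) =
      (∏ i : Fin m, ∏ j ∈ Finset.univ.filter (fun j => i < j), f (α i) (α j)) *
      (∏ i : Fin n, ∏ j ∈ Finset.univ.filter (fun j => i < j), f (β i) (β j)) *
      ∏ i : Fin m, ∏ j : Fin n, f (α i) (β j) := by
  simp only [Finset.prod_filter]
  rw [Fin.prod_univ_add]
  have hL : ∀ i : Fin m,
      (∏ j : Fin (m + n), if Fin.castAdd n i < j then
          f (Fin.append α β (Fin.castAdd n i)) (Fin.append α β j) else 1)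
      = (∏ j : Fin m, if i < j then f (α i) (α j) else 1) * ∏ j : Fin n, f (α i) (β j) := by
    intro i
    rw [Fin.prod_univ_add]
    congr 1
    · apply Finset.prod_congr rfl; intro j _
      simp only [Fin.append_left, Fin.lt_def, Fin.coe_castAdd]
    · apply Finset.prod_congr rfl; intro j _
      have : Fin.castAdd n i < Fin.natAdd m j := by
        simp [Fin.lt_def]; omega
      simp [this, Fin.append_left, Fin.append_right]
  have hR : ∀ i : Fin n,
      (∏ j : Fin (m + n), if Fin.natAdd m i < j then
          f (Fin.append α β (Fin.natAdd m i)) (Fin.append α β j) else 1)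
      = ∏ j : Fin n, if i < j then f (β i) (β j) else 1 := by
    intro i
    rw [Fin.prod_univ_add]
    have h1 : (∏ j : Fin m, if Fin.natAdd m i < Fin.castAdd n j then
        f (Fin.append α β (Fin.natAdd m i)) (Fin.append α β (Fin.castAdd n j)) else 1) = 1 := by
      apply Finset.prod_eq_one; intro j _
      have : ¬ Fin.natAdd m i < Fin.castAdd n j := by
        simp [Fin.lt_def]; omega
      simp [this]
    rw [h1, one_mul]
    apply Finset.prod_congr rfl; intro j _
    simp only [Fin.append_right, Fin.lt_def, Fin.coe_natAdd, add_lt_add_iff_left]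
  rw [Finset.prod_congr rfl (fun i _ => hL i), Finset.prod_congr rfl (fun i _ => hR i),
    Finset.prod_mul_distrib]
  rw [mul_right_comm]

/-- Let `K` be a field with a nonarchimedean absolute value `|·|`. Let
`F₀ = c₀ ∏ (x − α_i)` and `F₁ = c₁ ∏ (x − β_j)` be nonconstant split polynomials of degrees
`d₀, d₁`, and assume `|α_i| > |β_j|` for all roots. Then
`|disc(F₀F₁)| = |c₁|^{2d₀} |F₀(0)|^{2d₁} |disc F₀| |disc F₁|`. -/
theorem statement3 (K : Type*) [Field K] (v : AbsoluteValue K ℝ)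
    (hna : ∀ x y : K, v (x + y) ≤ max (v x) (v y))
    (d₀ d₁ : ℕ) (hd₀ : 1 ≤ d₀) (hd₁ : 1 ≤ d₁)
    (c₀ c₁ : K) (hc₀ : c₀ ≠ 0) (hc₁ : c₁ ≠ 0)
    (α : Fin d₀ → K) (β : Fin d₁ → K)
    (hroots : ∀ i j, v (β j) < v (α i)) :
    v (discOfRoots (d₀ + d₁) (c₀ * c₁) (Fin.append α β)) =
      v c₁ ^ (2 * d₀) *
        v (Polynomial.eval 0
            (Polynomial.C c₀ * ∏ i : Fin d₀, (Polynomial.X - Polynomial.C (α i)))) ^ (2 * d₁) *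
        v (discOfRoots d₀ c₀ α) * v (discOfRoots d₁ c₁ β) := by
  have heval : v (Polynomial.eval 0
      (Polynomial.C c₀ * ∏ i : Fin d₀, (Polynomial.X - Polynomial.C (α i))))
      = v c₀ * ∏ i : Fin d₀, v (α i) := by
    simp only [eval_mul, eval_C, eval_prod, eval_sub, eval_X, zero_sub, map_mul, map_prod,
      v.map_neg]
  unfold discOfRoots
  rw [prod_pairs_append d₀ d₁ (fun a b => (a - b) ^ 2) α β]
  have hcross : v (∏ i : Fin d₀, ∏ j : Fin d₁, (α i - β j) ^ 2)
      = (∏ i : Fin d₀, v (α i)) ^ (2 * d₁) := by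
    rw [map_prod, ← Finset.prod_pow]
    refine Finset.prod_congr rfl fun i _ => ?_
    rw [map_prod]
    have : ∀ j : Fin d₁, v ((α i - β j) ^ 2) = v (α i) ^ 2 := fun j => by
      rw [map_pow, ultra_sub v hna (hroots i j)]
    rw [Finset.prod_congr rfl fun j _ => this j, Finset.prod_const, Finset.card_univ,
      Fintype.card_fin, ← pow_mul]
  simp only [map_mul, map_pow, heval, hcross]
  have hx : v c₀ ^ (2 * (d₀ + d₁) - 2) = v c₀ ^ (2 * d₀ - 2) * v c₀ ^ (2 * d₁) := by
    rw [← pow_add]; congr 1; omega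
  have hy : v c₁ ^ (2 * (d₀ + d₁) - 2) = v c₁ ^ (2 * d₀) * v c₁ ^ (2 * d₁ - 2) := by
    rw [← pow_add]; congr 1; omega
  rw [mul_pow (v c₀) (v c₁), hx, hy, mul_pow (v c₀)]
  ring
end

section
/- Let g, n ≥ 1 be integers and let K = ℂ((t)) be the field of formal Laurent series over ℂ, with t-adic valuation ν. Then the polynomial F := (x^{g+1} + 1)(x^{g+1} + t^{n(g+1)}) ∈ K[x] is separable and splits over K, and ν(disc(F)) = n·g·(g+1). (This is the computation showing that the bound m_C ≤ 1 + ν(Δ_C)/(2g(g+1)) on the number of minimal Weierstrass models is sharp.) -/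
open Polynomial

instance : CharZero (LaurentSeries ℂ) :=
  ⟨fun a b h => by
    have := HahnSeries.C_injective (Γ := ℤ) (R := ℂ)
      (by rwa [map_natCast, map_natCast] :
        (HahnSeries.C (a : ℂ) : LaurentSeries ℂ) = HahnSeries.C (b : ℂ))
    exact_mod_cast this⟩

lemma s4_order_prod {ι : Type*} (s : Finset ι) (f : ι → LaurentSeries ℂ)
    (h : ∀ i ∈ s, f i ≠ 0) :
    (∏ i ∈ s, f i).order = ∑ i ∈ s, (f i).order := by
  classical
  induction s using Finset.cons_induction with
  | empty => simp [HahnSeries.order_one]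
  | cons a s ha ih =>
    rw [Finset.prod_cons, Finset.sum_cons,
      HahnSeries.order_mul (h a (Finset.mem_cons_self a s))
        (Finset.prod_ne_zero_iff.mpr fun i hi => h i (Finset.mem_cons_of_mem hi)),
      ih fun i hi => h i (Finset.mem_cons_of_mem hi)]

lemma s4_order_one_sub (M : ℤ) (hM : 0 < M) :
    ((1 : LaurentSeries ℂ) - HahnSeries.single M 1) ≠ 0 ∧
      ((1 : LaurentSeries ℂ) - HahnSeries.single M 1).order = 0 := by
  have h1 : (1 : LaurentSeries ℂ).orderTop = 0 := HahnSeries.orderTop_one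
  have h2 : (-(HahnSeries.single M 1 : LaurentSeries ℂ)).orderTop = (M : WithTop ℤ) := by
    rw [HahnSeries.orderTop_neg, HahnSeries.orderTop_single one_ne_zero]
  have hlt : (1 : LaurentSeries ℂ).orderTop
      < (-(HahnSeries.single M 1 : LaurentSeries ℂ)).orderTop := by
    rw [h1, h2]; exact_mod_cast hM
  have hadd : ((1 : LaurentSeries ℂ) + -(HahnSeries.single M 1)).orderTop = 0 :=
    (HahnSeries.orderTop_add_eq_left hlt).trans h1
  have hne : ((1 : LaurentSeries ℂ) - HahnSeries.single M 1) ≠ 0 := by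
    rw [sub_eq_add_neg]
    exact HahnSeries.orderTop_ne_top.mp (by rw [hadd]; exact WithTop.zero_ne_top)
  refine ⟨hne, ?_⟩
  have h3 := HahnSeries.order_eq_orderTop_of_ne_zero hne
  rw [sub_eq_add_neg, hadd] at h3
  exact_mod_cast h3

lemma s4_prod_neg {R : Type*} [CommRing R] {ι : Type*} [Fintype ι] (f : ι → R) :
    ∏ i : ι, -(f i) = (-1) ^ (Fintype.card ι) * ∏ i : ι, f i := by
  rw [← Finset.card_univ, ← Finset.prod_const, ← Finset.prod_mul_distrib]
  simp [neg_one_mul]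

lemma s4_sum_pairs {D : ℕ} (e : Fin D → Fin D → ℤ) (hsym : ∀ i j, e i j = e j i) :
    ∑ i : Fin D, ∑ j ∈ Finset.univ.filter (fun j => i < j), 2 * e i j
      = ∑ i : Fin D, ∑ j ∈ Finset.univ.erase i, e i j := by
  have hsplit : ∀ i : Fin D, (Finset.univ.erase i) =
      (Finset.univ.filter (fun j => i < j)) ∪ (Finset.univ.filter (fun j => j < i)) := by
    intro i; ext j
    simp only [Finset.mem_erase, Finset.mem_union, Finset.mem_filter, Finset.mem_univ,
      true_and, and_true]
    constructor
    · exact fun h => (Ne.lt_or_gt h).symm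
    · rintro (h | h); exacts [h.ne', h.ne]
  have hdisj : ∀ i : Fin D, Disjoint (Finset.univ.filter (fun j => i < j))
      (Finset.univ.filter (fun j => j < i)) := by
    intro i
    refine Finset.disjoint_left.mpr fun j hj1 hj2 => ?_
    simp only [Finset.mem_filter] at hj1 hj2
    exact absurd hj2.2 (lt_asymm hj1.2)
  have h2 : ∑ i : Fin D, ∑ j ∈ Finset.univ.filter (fun j => j < i), e i j
      = ∑ i : Fin D, ∑ j ∈ Finset.univ.filter (fun j => i < j), e i j := by
    rw [Finset.sum_comm' (t' := (Finset.univ : Finset (Fin D)))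
      (s' := fun j => Finset.univ.filter (fun i => j < i))
      (by intro x y; simp only [Finset.mem_filter, Finset.mem_univ, true_and, and_true])]
    exact Finset.sum_congr rfl fun j _ => Finset.sum_congr rfl fun i _ => hsym i j
  have h1 : ∑ i : Fin D, ∑ j ∈ Finset.univ.filter (fun j => i < j), 2 * e i j
      = (∑ i : Fin D, ∑ j ∈ Finset.univ.filter (fun j => i < j), e i j)
        + (∑ i : Fin D, ∑ j ∈ Finset.univ.filter (fun j => j < i), e i j) := by
    rw [h2, ← Finset.sum_add_distrib]
    exact Finset.sum_congr rfl fun i _ => by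
      rw [← Finset.sum_add_distrib]
      exact Finset.sum_congr rfl fun j _ => two_mul _
  rw [h1, ← Finset.sum_add_distrib]
  exact Finset.sum_congr rfl fun i _ => by rw [hsplit i, Finset.sum_union (hdisj i)]

noncomputable def s4F (g n : ℕ) : Polynomial (LaurentSeries ℂ) :=
  (X ^ (g + 1) + 1) *
    (X ^ (g + 1) + C ((HahnSeries.single (1 : ℤ) (1 : ℂ)) ^ (n * (g + 1))))

set_option maxHeartbeats 3200000 in
theorem s4_main (g n : ℕ) (hn : 1 ≤ n) :
    (s4F g n).Separable ∧ Splits (s4F g n) ∧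
      ∀ r : Fin (2 * (g + 1)) → LaurentSeries ℂ,
        s4F g n = C (s4F g n).leadingCoeff *
            ∏ i : Fin (2 * (g + 1)), (X - C (r i)) →
          discOfRoots (2 * (g + 1)) (s4F g n).leadingCoeff r ≠ 0 ∧
            (discOfRoots (2 * (g + 1)) (s4F g n).leadingCoeff r).order
              = (n * g * (g + 1) : ℤ) := by
  classical
  set t : LaurentSeries ℂ := HahnSeries.single (1 : ℤ) (1 : ℂ) with ht
  set M : ℕ := n * (g + 1) with hM
  set A : Polynomial (LaurentSeries ℂ) := X ^ (g + 1) + 1 with hA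
  set B : Polynomial (LaurentSeries ℂ) := X ^ (g + 1) + C (t ^ M) with hB
  have hFAB : s4F g n = A * B := rfl
  rw [hFAB]
  have hg1 : g + 1 ≠ 0 := Nat.succ_ne_zero g
  have hM0 : M ≠ 0 := Nat.mul_ne_zero (by omega) hg1
  have htM : t ^ M = HahnSeries.single (M : ℤ) (1 : ℂ) := by
    rw [ht, HahnSeries.single_pow, one_pow, nsmul_eq_mul, mul_one]
  have htMne : t ^ M ≠ 0 := by rw [htM]; exact HahnSeries.single_ne_zero one_ne_zero
  have hMZ : (0 : ℤ) < (M : ℤ) := Int.natCast_pos.mpr (Nat.pos_of_ne_zero hM0)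
  obtain ⟨hcne0, hcord0⟩ := s4_order_one_sub (M : ℤ) hMZ
  have hcne : (1 : LaurentSeries ℂ) - t ^ M ≠ 0 := by rw [htM]; exact hcne0
  have hcord : ((1 : LaurentSeries ℂ) - t ^ M).order = 0 := by rw [htM]; exact hcord0
  -- separability
  have sepA : A.Separable := by
    have h : A = X ^ (g + 1) - C (-1 : LaurentSeries ℂ) := by
      rw [hA, map_neg, map_one, sub_neg_eq_add]
    rw [h]
    exact separable_X_pow_sub_C _ (Nat.cast_ne_zero.mpr hg1) (neg_ne_zero.mpr one_ne_zero)
  have sepB : B.Separable := by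
    have h : B = X ^ (g + 1) - C (-(t ^ M)) := by rw [hB, map_neg, sub_neg_eq_add]
    rw [h]
    exact separable_X_pow_sub_C _ (Nat.cast_ne_zero.mpr hg1) (neg_ne_zero.mpr htMne)
  have hABsub : A - B = C ((1 : LaurentSeries ℂ) - t ^ M) := by
    rw [hA, hB, map_sub, map_one]; ring
  have cop : IsCoprime A B := by
    refine ⟨C ((1 : LaurentSeries ℂ) - t ^ M)⁻¹, -(C ((1 : LaurentSeries ℂ) - t ^ M)⁻¹), ?_⟩
    have h : C ((1 : LaurentSeries ℂ) - t ^ M)⁻¹ * A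
        + -(C ((1 : LaurentSeries ℂ) - t ^ M)⁻¹) * B
        = C ((1 : LaurentSeries ℂ) - t ^ M)⁻¹ * (A - B) := by ring
    rw [h, hABsub, ← map_mul, inv_mul_cancel₀ hcne, map_one]
  have sepF : (A * B).Separable := sepA.mul sepB cop
  -- splits for A
  have mapA : A = (X ^ (g + 1) + 1 : Polynomial ℂ).map (HahnSeries.C (Γ := ℤ)) := by
    rw [hA]
    simp [Polynomial.map_add, Polynomial.map_pow, Polynomial.map_one, Polynomial.map_X]
  have splitsA : Splits A := by
    rw [mapA]
    exact (IsAlgClosed.splits (k := ℂ) (X ^ (g + 1) + 1)).map _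
  have hAC : A = X ^ (g + 1) + C (1 : LaurentSeries ℂ) := by rw [hA, map_one]
  have hAmonic : A.Monic := by rw [hAC]; exact monic_X_pow_add_C _ hg1
  have hAdeg : A.natDegree = g + 1 := by rw [hAC, natDegree_X_pow_add_C]
  have hAcard : Multiset.card A.roots = g + 1 := by
    rw [splits_iff_card_roots.mp splitsA, hAdeg]
  have hAnodup : A.roots.Nodup := nodup_roots sepA
  have hAroots : ∀ a ∈ A.roots, a ^ (g + 1) = -1 := by
    intro a ha
    have h := (mem_roots'.mp ha).2
    rw [hA] at h
    simp only [IsRoot, eval_add, eval_pow, eval_X, eval_one] at h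
    linear_combination h
  -- splits for B
  have hBmonic : B.Monic := by rw [hB]; exact monic_X_pow_add_C _ hg1
  have hBdeg : B.natDegree = g + 1 := by rw [hB, natDegree_X_pow_add_C]
  have hBne : B ≠ 0 := hBmonic.ne_zero
  set u : LaurentSeries ℂ := HahnSeries.single (n : ℤ) (1 : ℂ) with hu
  have hune : u ≠ 0 := HahnSeries.single_ne_zero one_ne_zero
  have huM : u ^ (g + 1) = t ^ M := by
    rw [hu, HahnSeries.single_pow, one_pow, htM]
    congr 1
    rw [hM]
    push_cast
    ring
  have hBroots_sub : (A.roots.map (fun a => u * a)) ≤ B.roots := by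
    have hnd : (A.roots.map (fun a => u * a)).Nodup :=
      hAnodup.map (mul_right_injective₀ hune)
    rw [Multiset.le_iff_subset hnd]
    intro b hb
    obtain ⟨a, ha, rfl⟩ := Multiset.mem_map.mp hb
    refine mem_roots'.mpr ⟨hBne, ?_⟩
    rw [hB]
    simp only [IsRoot, eval_add, eval_pow, eval_X, eval_C]
    rw [mul_pow, huM, hAroots a ha]
    ring
  have hBcard : Multiset.card B.roots = g + 1 := by
    refine le_antisymm (hBdeg ▸ card_roots' B) ?_
    have := Multiset.card_le_card hBroots_sub
    rwa [Multiset.card_map, hAcard] at this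
  have splitsB : Splits B :=
    splits_iff_card_roots.mpr (by rw [hBcard, hBdeg])
  have splitsF : Splits (A * B) := splitsA.mul splitsB
  have monF : (A * B).Monic := hAmonic.mul hBmonic
  refine ⟨sepF, splitsF, ?_⟩
  intro r hr
  rw [monF.leadingCoeff, map_one, one_mul] at hr
  rw [monF.leadingCoeff]
  simp only [discOfRoots, one_pow, one_mul]
  -- injectivity of the root listing
  have hrootsF : (A * B).roots = Multiset.map r Finset.univ.val := by
    rw [hr]
    have h : (∏ i : Fin (2 * (g + 1)), (X - C (r i)))
        = ((Multiset.map r Finset.univ.val).map (fun a => X - C a)).prod := by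
      rw [Multiset.map_map]; rfl
    rw [h, roots_multiset_prod_X_sub_C]
  have hnodup : (Multiset.map r Finset.univ.val).Nodup := hrootsF ▸ nodup_roots sepF
  have hrinj : ∀ i j, r i = r j → i = j := by
    intro i j hij
    exact Multiset.inj_on_of_nodup_map hnodup i (Finset.mem_univ_val i) j (Finset.mem_univ_val j) hij
  have hsub_ne : ∀ i j : Fin (2 * (g + 1)), i ≠ j → r i - r j ≠ 0 :=
    fun i j h => sub_ne_zero.mpr fun e => h (hrinj _ _ e)
  -- evaluation at roots
  have hev0 : ∀ i, A.eval (r i) * B.eval (r i) = 0 := by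
    intro i
    have h : (A * B).eval (r i) = 0 := by
      rw [hr, eval_prod]
      exact Finset.prod_eq_zero (Finset.mem_univ i) (by simp)
    rwa [eval_mul] at h
  have hevA : ∀ x : LaurentSeries ℂ, A.eval x = x ^ (g + 1) + 1 := by
    intro x; rw [hA]; simp
  have hevB : ∀ x : LaurentSeries ℂ, B.eval x = x ^ (g + 1) + t ^ M := by
    intro x; rw [hB]; simp
  have hsumAB : ∀ i, A.eval (r i) + B.eval (r i) = 1 - t ^ M
      ∨ A.eval (r i) + B.eval (r i) = -(1 - t ^ M) := by
    intro i
    rcases mul_eq_zero.mp (hev0 i) with h | h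
    · right
      rw [hevA] at h
      have hx : (r i) ^ (g + 1) = -1 := by linear_combination h
      rw [hevA, hevB, hx]; ring
    · left
      rw [hevB] at h
      have hx : (r i) ^ (g + 1) = -(t ^ M) := by linear_combination h
      rw [hevA, hevB, hx]; ring
  have hsum_ne : ∀ i, A.eval (r i) + B.eval (r i) ≠ 0 := by
    intro i
    rcases hsumAB i with h | h
    · rw [h]; exact hcne
    · rw [h]; exact neg_ne_zero.mpr hcne
  have hsum_ord : ∀ i, (A.eval (r i) + B.eval (r i)).order = 0 := by
    intro i
    rcases hsumAB i with h | h
    · rw [h]; exact hcord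
    · rw [h, HahnSeries.order_neg]; exact hcord
  -- the product of the roots
  have hev00 : (A * B).eval 0 = t ^ M := by
    rw [hA, hB]; simp [zero_pow hg1]
  have hprod : ∏ i : Fin (2 * (g + 1)), r i = t ^ M := by
    have h0 : (A * B).eval 0 = ∏ i : Fin (2 * (g + 1)), -(r i) := by
      rw [hr, eval_prod]
      exact Finset.prod_congr rfl fun j _ => by simp
    have h1 : ∏ i : Fin (2 * (g + 1)), -(r i)
        = (-1 : LaurentSeries ℂ) ^ (2 * (g + 1)) * ∏ i : Fin (2 * (g + 1)), r i := by
      have h := s4_prod_neg r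
      rwa [Fintype.card_fin] at h
    have heven : (-1 : LaurentSeries ℂ) ^ (2 * (g + 1)) = 1 := by
      rw [pow_mul]; norm_num
    rw [hev00, h1, heven, one_mul] at h0
    exact h0.symm
  have hrne : ∀ i, r i ≠ 0 := by
    intro i hzero
    exact htMne (by rw [← hprod]; exact Finset.prod_eq_zero (Finset.mem_univ i) hzero)
  have hordsum : ∑ i : Fin (2 * (g + 1)), (r i).order = (M : ℤ) := by
    rw [← s4_order_prod _ _ (fun i _ => hrne i), hprod, htM,
      HahnSeries.order_single one_ne_zero]
  -- derivative evaluated at roots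
  have hder_eval : ∀ i, (derivative (A * B)).eval (r i)
      = ∏ j ∈ Finset.univ.erase i, (r i - r j) := by
    intro i
    rw [hr, ← Finset.mul_prod_erase Finset.univ _ (Finset.mem_univ i), derivative_mul,
      derivative_X_sub_C, one_mul]
    simp [eval_add, eval_mul, eval_prod]
  have hder : derivative (A * B)
      = C (((g + 1 : ℕ) : LaurentSeries ℂ)) * (X ^ g * (A + B)) := by
    rw [derivative_mul, hA, hB]
    simp only [derivative_add, derivative_X_pow, derivative_one, derivative_C, add_zero,
      Nat.add_sub_cancel]
    push_cast
    ring
  have hgne : ((g + 1 : ℕ) : LaurentSeries ℂ) ≠ 0 := Nat.cast_ne_zero.mpr hg1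
  have hgord : (((g + 1 : ℕ) : LaurentSeries ℂ)).order = 0 := by
    rw [show ((g + 1 : ℕ) : LaurentSeries ℂ) = HahnSeries.C ((g + 1 : ℕ) : ℂ) by
      rw [map_natCast], HahnSeries.order_C]
  have hder_ord : ∀ i, ((derivative (A * B)).eval (r i)).order = (g : ℤ) * (r i).order := by
    intro i
    rw [hder, eval_mul, eval_C, eval_mul, eval_pow, eval_X, eval_add,
      HahnSeries.order_mul hgne (mul_ne_zero (pow_ne_zero _ (hrne i)) (hsum_ne i)),
      HahnSeries.order_mul (pow_ne_zero _ (hrne i)) (hsum_ne i),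
      HahnSeries.order_pow, hsum_ord i, add_zero, hgord, zero_add, nsmul_eq_mul]
  -- nonvanishing of the discriminant expression
  have hdisc_ne : (∏ i : Fin (2 * (g + 1)),
      ∏ j ∈ Finset.univ.filter (fun j => i < j), (r i - r j) ^ 2) ≠ 0 := by
    refine Finset.prod_ne_zero_iff.mpr fun i _ => Finset.prod_ne_zero_iff.mpr fun j hj => ?_
    exact pow_ne_zero _ (hsub_ne i j (ne_of_lt (Finset.mem_filter.mp hj).2))
  refine ⟨hdisc_ne, ?_⟩
  -- order computation
  have hstep1 : (∏ i : Fin (2 * (g + 1)),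
      ∏ j ∈ Finset.univ.filter (fun j => i < j), (r i - r j) ^ 2).order
      = ∑ i : Fin (2 * (g + 1)), ∑ j ∈ Finset.univ.filter (fun j => i < j),
          2 * (r i - r j).order := by
    rw [s4_order_prod _ _ (fun i _ => Finset.prod_ne_zero_iff.mpr fun j hj =>
      pow_ne_zero _ (hsub_ne i j (ne_of_lt (Finset.mem_filter.mp hj).2)))]
    refine Finset.sum_congr rfl fun i _ => ?_
    rw [s4_order_prod _ _ (fun j hj =>
      pow_ne_zero _ (hsub_ne i j (ne_of_lt (Finset.mem_filter.mp hj).2)))]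
    refine Finset.sum_congr rfl fun j _ => ?_
    rw [HahnSeries.order_pow, nsmul_eq_mul]
    norm_num
  have hsym : ∀ i j : Fin (2 * (g + 1)), (r i - r j).order = (r j - r i).order := by
    intro i j
    rw [← neg_sub (r j) (r i), HahnSeries.order_neg]
  have hstep2 : ∑ i : Fin (2 * (g + 1)), ∑ j ∈ Finset.univ.filter (fun j => i < j),
      2 * (r i - r j).order
      = ∑ i : Fin (2 * (g + 1)), ∑ j ∈ Finset.univ.erase i, (r i - r j).order :=
    s4_sum_pairs (fun i j => (r i - r j).order) hsym
  have hstep3 : ∑ i : Fin (2 * (g + 1)), ∑ j ∈ Finset.univ.erase i, (r i - r j).order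
      = (g : ℤ) * (M : ℤ) := by
    have h : ∀ i : Fin (2 * (g + 1)), ∑ j ∈ Finset.univ.erase i, (r i - r j).order
        = (g : ℤ) * (r i).order := by
      intro i
      rw [← s4_order_prod _ _ (fun j hj => hsub_ne i j (Finset.ne_of_mem_erase hj).symm),
        ← hder_eval i, hder_ord i]
    rw [Finset.sum_congr rfl fun i _ => h i, ← Finset.mul_sum, hordsum]
  rw [hstep1, hstep2, hstep3, hM]
  push_cast
  ring

/-- Over `K = ℂ((t))` with `t`-adic valuation `ν`, the polynomial
`F = (x^{g+1} + 1)(x^{g+1} + t^{n(g+1)})` is separable and splits over `K`, and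
`ν(disc F) = n·g·(g+1)`. -/
theorem statement4 (g n : ℕ) (hg : 1 ≤ g) (hn : 1 ≤ n) :
    letI K := LaurentSeries ℂ
    letI t : K := HahnSeries.single (1 : ℤ) (1 : ℂ)
    letI F : Polynomial K :=
      (Polynomial.X ^ (g + 1) + 1) *
        (Polynomial.X ^ (g + 1) + Polynomial.C (t ^ (n * (g + 1))))
    F.Separable ∧ Polynomial.Splits F ∧
      ∀ r : Fin (2 * (g + 1)) → K,
        F = Polynomial.C F.leadingCoeff *
            ∏ i : Fin (2 * (g + 1)), (Polynomial.X - Polynomial.C (r i)) →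
          discOfRoots (2 * (g + 1)) F.leadingCoeff r ≠ 0 ∧
            (discOfRoots (2 * (g + 1)) F.leadingCoeff r).order = (n * g * (g + 1) : ℤ) := by
  exact s4_main g n hn
end

section
/- Let O_K be a discrete valuation ring with uniformizer π and fraction field K. Let n, m ≥ 1 be integers, let A = (a_{ij}) and B = (b_{ij}) be matrices in GL₂(O_K), and let r be an integer such that, in K: π^n a₁₁ = π^r b₁₁, π^{n+m} a₁₂ = π^r b₁₂, a₂₁ = π^r b₂₁, and π^m a₂₂ = π^r b₂₂. Then a₁₁ and a₂₂ are units of O_K, a₂₁ ∈ πO_K, 2r = n + m, and n = m. -/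
lemma aux_nonunit_dvd {R : Type*} [CommRing R] [IsDomain R] [IsDiscreteValuationRing R]
    {π x : R} (hπ : Irreducible π) (hx : ¬IsUnit x) : π ∣ x := by
  have h := (IsDiscreteValuationRing.irreducible_iff_uniformizer π).mp hπ
  have : x ∈ IsLocalRing.maximalIdeal R := hx
  rw [h, Ideal.mem_span_singleton] at this
  exact this

lemma aux_pow_eq {R : Type*} [CommRing R] [IsDomain R]
    {π : R} (hπ : Irreducible π) {a b : ℕ} {u w : R} (hu : IsUnit u) (hw : IsUnit w)
    (h : π ^ a * u = π ^ b * w) : a = b := by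
  have hπ0 : π ≠ 0 := hπ.ne_zero
  have hπu : ¬IsUnit π := hπ.not_isUnit
  have h1 : π ^ a ∣ π ^ b := by
    have : π ^ a ∣ π ^ b * w := ⟨u, h.symm⟩
    exact hw.dvd_mul_right.mp this
  have h2 : π ^ b ∣ π ^ a := by
    have : π ^ b ∣ π ^ a * u := ⟨w, h⟩
    exact hu.dvd_mul_right.mp this
  exact le_antisymm ((pow_dvd_pow_iff hπ0 hπu).mp h1) ((pow_dvd_pow_iff hπ0 hπu).mp h2)

/-- Let `O_K` be a DVR with uniformizer `π` and fraction field `K`. Let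
`n, m ≥ 1`, let `A, B ∈ GL₂(O_K)` and `r ∈ ℤ` satisfy, in `K`:
`π^n a₁₁ = π^r b₁₁`, `π^{n+m} a₁₂ = π^r b₁₂`, `a₂₁ = π^r b₂₁`, `π^m a₂₂ = π^r b₂₂`.
Then `a₁₁, a₂₂ ∈ O_K^*`, `a₂₁ ∈ πO_K`, `2r = n + m` and `n = m`. -/
theorem statement5 (O_K : Type*) [CommRing O_K] [IsDomain O_K] [IsDiscreteValuationRing O_K]
    (K : Type*) [Field K] [Algebra O_K K] [IsFractionRing O_K K]
    (π : O_K) (hπ : Irreducible π)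
    (n m : ℕ) (hn : 1 ≤ n) (hm : 1 ≤ m)
    (A B : Matrix (Fin 2) (Fin 2) O_K)
    (hA : IsUnit A.det) (hB : IsUnit B.det) (r : ℤ)
    (h11 : (algebraMap O_K K π) ^ (n : ℕ) * algebraMap O_K K (A 0 0) =
      (algebraMap O_K K π) ^ r * algebraMap O_K K (B 0 0))
    (h12 : (algebraMap O_K K π) ^ (n + m : ℕ) * algebraMap O_K K (A 0 1) =
      (algebraMap O_K K π) ^ r * algebraMap O_K K (B 0 1))
    (h21 : algebraMap O_K K (A 1 0) =
      (algebraMap O_K K π) ^ r * algebraMap O_K K (B 1 0))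
    (h22 : (algebraMap O_K K π) ^ (m : ℕ) * algebraMap O_K K (A 1 1) =
      (algebraMap O_K K π) ^ r * algebraMap O_K K (B 1 1)) :
    IsUnit (A 0 0) ∧ IsUnit (A 1 1) ∧ π ∣ A 1 0 ∧ 2 * r = (n : ℤ) + (m : ℤ) ∧ n = m := by
  have inj : Function.Injective (algebraMap O_K K) := IsFractionRing.injective O_K K
  set f := algebraMap O_K K with hf
  have hπ0 : π ≠ 0 := hπ.ne_zero
  have hπu : ¬IsUnit π := hπ.not_isUnit
  have hfπ0 : f π ≠ 0 := by
    simp only [hf, Ne, map_eq_zero_iff _ inj]; exact (map_ne_zero_iff _ inj).mpr hπ0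
  -- first, r ≥ 0
  have hr0 : 0 ≤ r := by
    by_contra hneg
    push_neg at hneg
    set s : ℕ := (-r).toNat with hs
    have hrs : r = -(s : ℤ) := by omega
    have hzpow : (f π) ^ r = ((f π) ^ s)⁻¹ := by
      rw [hrs, zpow_neg, zpow_natCast]
    have hps : (f π) ^ s ≠ 0 := pow_ne_zero _ hfπ0
    -- transform the four equations into O_K
    have e11 : π ^ (n + s) * A 0 0 = B 0 0 := by
      apply inj
      have : (f π) ^ n * f (A 0 0) * (f π) ^ s = f (B 0 0) := by
        rw [h11, hzpow]; field_simp
      simpa [map_mul, map_pow, pow_add, mul_comm, mul_left_comm, mul_assoc] using this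
    have e12 : π ^ (n + m + s) * A 0 1 = B 0 1 := by
      apply inj
      have : (f π) ^ (n + m) * f (A 0 1) * (f π) ^ s = f (B 0 1) := by
        rw [h12, hzpow]; field_simp
      simpa [map_mul, map_pow, pow_add, mul_comm, mul_left_comm, mul_assoc] using this
    have e21 : π ^ s * A 1 0 = B 1 0 := by
      apply inj
      have : f (A 1 0) * (f π) ^ s = f (B 1 0) := by
        rw [h21, hzpow]; field_simp
      simpa [map_mul, map_pow, mul_comm, mul_left_comm, mul_assoc] using this
    have e22 : π ^ (m + s) * A 1 1 = B 1 1 := by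
      apply inj
      have : (f π) ^ m * f (A 1 1) * (f π) ^ s = f (B 1 1) := by
        rw [h22, hzpow]; field_simp
      simpa [map_mul, map_pow, pow_add, mul_comm, mul_left_comm, mul_assoc] using this
    -- det B = π ^ (n+m+2s) * det A
    have hdet : B.det = π ^ (n + m + 2 * s) * A.det := by
      rw [Matrix.det_fin_two, Matrix.det_fin_two, ← e11, ← e12, ← e21, ← e22]
      ring
    have : π ∣ B.det := by
      rw [hdet]
      exact Dvd.dvd.mul_right (dvd_pow_self π (by omega)) _
    exact hπu (isUnit_of_dvd_unit this hB)
  -- now r = k : ℕ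
  obtain ⟨k, hk⟩ := Int.eq_ofNat_of_zero_le hr0
  have hzpow : (f π) ^ r = (f π) ^ k := by rw [hk, zpow_natCast]
  rw [hzpow] at h11 h12 h21 h22
  have e11 : π ^ n * A 0 0 = π ^ k * B 0 0 := by
    apply inj; simpa [map_mul, map_pow] using h11
  have e12 : π ^ (n + m) * A 0 1 = π ^ k * B 0 1 := by
    apply inj; simpa [map_mul, map_pow] using h12
  have e21 : A 1 0 = π ^ k * B 1 0 := by
    apply inj; simpa [map_mul, map_pow] using h21
  have e22 : π ^ m * A 1 1 = π ^ k * B 1 1 := by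
    apply inj; simpa [map_mul, map_pow] using h22
  -- π^(n+m) det A = π^(2k) det B
  have hdet : π ^ (n + m) * A.det = π ^ (2 * k) * B.det := by
    rw [Matrix.det_fin_two, Matrix.det_fin_two]
    have h1 : π ^ (n + m) * (A 0 0 * A 1 1) = π ^ (2 * k) * (B 0 0 * B 1 1) := by
      have := congrArg₂ (· * ·) e11 e22
      calc π ^ (n + m) * (A 0 0 * A 1 1) = (π ^ n * A 0 0) * (π ^ m * A 1 1) := by
            rw [pow_add]; ring
        _ = (π ^ k * B 0 0) * (π ^ k * B 1 1) := by rw [e11, e22]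
        _ = π ^ (2 * k) * (B 0 0 * B 1 1) := by rw [two_mul, pow_add]; ring
    have h2 : π ^ (n + m) * (A 0 1 * A 1 0) = π ^ (2 * k) * (B 0 1 * B 1 0) := by
      calc π ^ (n + m) * (A 0 1 * A 1 0) = (π ^ (n + m) * A 0 1) * A 1 0 := by ring
        _ = (π ^ k * B 0 1) * (π ^ k * B 1 0) := by rw [e12, e21]
        _ = π ^ (2 * k) * (B 0 1 * B 1 0) := by rw [two_mul, pow_add]; ring
    rw [mul_sub, mul_sub, h1, h2]
  have hnm : n + m = 2 * k := aux_pow_eq hπ hA hB hdet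
  have hk1 : 1 ≤ k := by omega
  have hd21 : π ∣ A 1 0 := by
    rw [e21]
    exact Dvd.dvd.mul_right (dvd_pow_self π (by omega)) _
  -- a11 a22 is a unit
  have hu : IsUnit (A 0 0 * A 1 1) := by
    by_contra hnu
    have h1 : π ∣ A 0 0 * A 1 1 := aux_nonunit_dvd hπ hnu
    have h2 : π ∣ A 0 1 * A 1 0 := hd21.mul_left _
    have : π ∣ A.det := by
      rw [Matrix.det_fin_two]; exact dvd_sub h1 h2
    exact hπu (isUnit_of_dvd_unit this hA)
  have hu11 : IsUnit (A 0 0) := isUnit_of_mul_isUnit_left hu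
  have hu22 : IsUnit (A 1 1) := isUnit_of_mul_isUnit_right hu
  -- k ≤ n and k ≤ m
  have hkn : k ≤ n := by
    have : π ^ k ∣ π ^ n := by
      have h1 : π ^ k ∣ π ^ n * A 0 0 := ⟨B 0 0, e11⟩
      exact hu11.dvd_mul_right.mp h1
    exact (pow_dvd_pow_iff hπ0 hπu).mp this
  have hkm : k ≤ m := by
    have : π ^ k ∣ π ^ m := by
      have h1 : π ^ k ∣ π ^ m * A 1 1 := ⟨B 1 1, e22⟩
      exact hu22.dvd_mul_right.mp h1
    exact (pow_dvd_pow_iff hπ0 hπu).mp this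
  refine ⟨hu11, hu22, hd21, ?_, ?_⟩ <;> omega
end

section
/- Let Q, P ∈ O_K[x] and let H be an adapted shift for P; set R := Q − 2H and S := P + QH − H². Then λ₀(R, S) ≥ λ₀(Q, P). Moreover, if there exists H' ∈ O_K[x] with λ₀(Q − 2H', P + QH' − H'²) > λ₀(Q, P), then the inequality is strict: λ₀(R, S) > λ₀(Q, P). -/
set_option linter.unusedSectionVars false


open Polynomial

/-- The normalized valuation on a DVR with uniformizer `π`: `ν(a)` is the supremum of the
naturals `l` with `π^l ∣ a` (so `ν(0) = ⊤`). -/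
noncomputable def nuVal {O_K : Type*} [CommRing O_K] (π : O_K) (a : O_K) : ℕ∞ :=
  ⨆ l : {l : ℕ // π ^ l ∣ a}, ((l : ℕ) : ℕ∞)

/-- `μ₀(G) = min_j (ν(c_j) + j)` for `G = Σ_j c_j x^j` (with `μ₀(0) = ⊤`). -/
noncomputable def mu0 {O_K : Type*} [CommRing O_K] (π : O_K) (G : Polynomial O_K) : ℕ∞ :=
  ⨅ j : ℕ, (nuVal π (G.coeff j) + (j : ℕ∞))

/-- `λ₀(Q, P) = min {2μ₀(Q), μ₀(P)}`. -/
noncomputable def lam0 {O_K : Type*} [CommRing O_K] (π : O_K) (Q P : Polynomial O_K) : ℕ∞ :=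
  min (2 * mu0 π Q) (mu0 π P)

open Classical in
/-- The order of vanishing at `x = 0` of a polynomial over the residue field, with
`ord₀(0) = ⊤`. -/
noncomputable def ordZero {k : Type*} [CommRing k] (g : Polynomial k) : ℕ∞ :=
  if g = 0 then ⊤ else (g.rootMultiplicity 0 : ℕ∞)

/-- `δ₀(Q, P) = min {2·ord₀(Q̄), ord₀(P̄)}`, where `Ḡ` is the reduction modulo the maximal
ideal. -/
noncomputable def delta0 {O_K : Type*} [CommRing O_K] [IsLocalRing O_K]
    (Q P : Polynomial O_K) : ℕ∞ :=
  min (2 * ordZero (Q.map (IsLocalRing.residue O_K)))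
    (ordZero (P.map (IsLocalRing.residue O_K)))

/-- `H = Σ_j e_j x^j` is an adapted shift for `P = Σ_j a_j x^j` if for every `j`:
`e_j = 0` whenever `a_{2j} = 0` or `ν(a_{2j})` is odd, and `e_j² ∈ a_{2j}(1 + πO_K)`
whenever `a_{2j} ≠ 0` and `ν(a_{2j})` is even. -/
def IsAdaptedShift {O_K : Type*} [CommRing O_K] (π : O_K) (P H : Polynomial O_K) : Prop :=
  ∀ j : ℕ,
    ((P.coeff (2 * j) = 0 ∨ ¬ ∃ m : ℕ, nuVal π (P.coeff (2 * j)) = ((2 * m : ℕ) : ℕ∞)) →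
      H.coeff j = 0) ∧
    ((P.coeff (2 * j) ≠ 0 ∧ ∃ m : ℕ, nuVal π (P.coeff (2 * j)) = ((2 * m : ℕ) : ℕ∞)) →
      ∃ u : O_K, (H.coeff j) ^ 2 = P.coeff (2 * j) * (1 + π * u))

section ENatHelpers

theorem enat_le_of_forall {x y : ℕ∞} (h : ∀ n : ℕ, (n : ℕ∞) ≤ y → (n : ℕ∞) ≤ x) : y ≤ x := by
  induction y using ENat.recTopCoe with
  | top =>
    induction x using ENat.recTopCoe with
    | top => exact le_rfl
    | coe m =>
      have := h (m + 1) le_top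
      exact absurd this (by exact_mod_cast Nat.not_succ_le_self m)
  | coe n => exact h n le_rfl

theorem enat_two_mul_le {x y : ℕ∞} (h : 2 * x ≤ 2 * y) : x ≤ y := by
  by_contra hxy
  push_neg at hxy
  induction y using ENat.recTopCoe with
  | top => exact absurd hxy (not_lt.mpr le_top)
  | coe n =>
    have h1 : ((n : ℕ∞) + 1) ≤ x := (ENat.add_one_le_iff (by simp)).mpr hxy
    have h2 : 2 * ((n : ℕ∞) + 1) ≤ 2 * x := mul_le_mul_right h1 2
    have h3 : 2 * x ≤ 2 * (n : ℕ∞) := h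
    have h4 : 2 * ((n : ℕ∞) + 1) ≤ 2 * (n : ℕ∞) := le_trans h2 h3
    have : ((2 * n + 2 : ℕ) : ℕ∞) ≤ ((2 * n : ℕ) : ℕ∞) := by
      refine le_trans (le_of_eq ?_) h4
      push_cast; ring
    exact absurd (Nat.cast_le.mp this) (by omega)

theorem enat_two_mul_lt {x y : ℕ∞} (h : 2 * x < 2 * y) : x < y := by
  by_contra hxy
  push_neg at hxy
  exact absurd (mul_le_mul_right hxy 2) (not_le.mpr h)

theorem enat_exists_eq_iInf (f : ℕ → ℕ∞) : ∃ j, f j = ⨅ i, f i := by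
  by_contra h
  push_neg at h
  have hm : ∀ j, ⨅ i, f i < f j := fun j => lt_of_le_of_ne (iInf_le f j) (Ne.symm (h j))
  have hnt : (⨅ i, f i) ≠ ⊤ := by
    intro ht
    have := hm 0
    rw [ht] at this
    exact absurd this (not_top_lt)
  have : ∀ j, (⨅ i, f i) + 1 ≤ f j := fun j => (ENat.add_one_le_iff hnt).mpr (hm j)
  have h2 : (⨅ i, f i) + 1 ≤ ⨅ i, f i := le_iInf this
  have h3 : (⨅ i, f i) < (⨅ i, f i) + 1 := ENat.lt_add_one_iff hnt |>.mpr le_rfl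
  exact absurd h2 (not_le.mpr h3)

end ENatHelpers

section NuVal

variable {O_K : Type*} [CommRing O_K] [IsDomain O_K] [IsDiscreteValuationRing O_K]
  {π : O_K} (hπ : Irreducible π)

theorem nu_dvd {a : O_K} {l : ℕ} (h : π ^ l ∣ a) : (l : ℕ∞) ≤ nuVal π a :=
  le_iSup (fun l : {l : ℕ // π ^ l ∣ a} => ((l : ℕ) : ℕ∞)) ⟨l, h⟩

theorem nu_zero : nuVal π (0 : O_K) = ⊤ := by
  refine le_antisymm le_top (enat_le_of_forall fun n _ => nu_dvd (dvd_zero _))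

theorem nu_eq_of {a : O_K} {n : ℕ} (hd : π ^ n ∣ a) (hnd : ¬ π ^ (n + 1) ∣ a) :
    nuVal π a = n := by
  refine le_antisymm (iSup_le ?_) (nu_dvd hd)
  rintro ⟨l, hl⟩
  simp only [Nat.cast_le]
  by_contra hln
  push_neg at hln
  exact hnd (dvd_trans (pow_dvd_pow π hln) hl)

include hπ

theorem nu_spec {a : O_K} (ha : a ≠ 0) :
    ∃ n : ℕ, nuVal π a = n ∧ π ^ n ∣ a ∧ ¬ π ^ (n + 1) ∣ a := by
  obtain ⟨n, u, hu⟩ := IsDiscreteValuationRing.associated_pow_irreducible ha hπ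
  have hd : π ^ n ∣ a := ⟨(↑u⁻¹ : O_K), by rw [← hu, mul_assoc, Units.mul_inv, mul_one]⟩
  have hnd : ¬ π ^ (n + 1) ∣ a := by
    rintro ⟨c, hc⟩
    rw [hc] at hu
    have hc2 : π ^ n * 1 = π ^ n * (π * (c * ↑u)) := by
      linear_combination -hu
    have hπn : (π : O_K) ^ n ≠ 0 := pow_ne_zero n hπ.ne_zero
    have : (1 : O_K) = π * (c * ↑u) := mul_left_cancel₀ hπn hc2
    exact hπ.not_isUnit (IsUnit.of_mul_eq_one (c * ↑u) this.symm)
  exact ⟨n, nu_eq_of hd hnd, hd, hnd⟩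

theorem nu_le_dvd {a : O_K} {l : ℕ} (h : (l : ℕ∞) ≤ nuVal π a) : π ^ l ∣ a := by
  by_cases ha : a = 0
  · exact ha ▸ dvd_zero _
  · obtain ⟨n, hn, hd, _⟩ := nu_spec hπ ha
    rw [hn, Nat.cast_le] at h
    exact dvd_trans (pow_dvd_pow π h) hd

theorem nu_dvd_mono {a b : O_K} (h : a ∣ b) : nuVal π a ≤ nuVal π b :=
  enat_le_of_forall fun _ hn => nu_dvd (dvd_trans (nu_le_dvd hπ hn) h)

theorem nu_neg (a : O_K) : nuVal π (-a) = nuVal π a :=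
  le_antisymm (nu_dvd_mono hπ (neg_dvd.mpr dvd_rfl)) (nu_dvd_mono hπ (dvd_neg.mpr dvd_rfl))

theorem nu_eq_top_iff {a : O_K} : nuVal π a = ⊤ ↔ a = 0 := by
  constructor
  · intro h
    by_contra ha
    obtain ⟨n, hn, -, -⟩ := nu_spec hπ ha
    rw [hn] at h
    exact (ENat.coe_ne_top n) h
  · rintro rfl; exact nu_zero

theorem nu_add {a b : O_K} : min (nuVal π a) (nuVal π b) ≤ nuVal π (a + b) := by
  refine enat_le_of_forall fun n hn => nu_dvd (dvd_add ?_ ?_)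
  · exact nu_le_dvd hπ (le_trans hn (min_le_left _ _))
  · exact nu_le_dvd hπ (le_trans hn (min_le_right _ _))

theorem nu_mul_ge {a b : O_K} : nuVal π a + nuVal π b ≤ nuVal π (a * b) := by
  by_cases ha : a = 0
  · subst ha; rw [zero_mul]; exact le_top.trans (le_of_eq nu_zero.symm)
  by_cases hb : b = 0
  · subst hb; rw [mul_zero]; exact le_top.trans (le_of_eq nu_zero.symm)
  obtain ⟨n, hn, hdn, -⟩ := nu_spec hπ ha
  obtain ⟨m, hm, hdm, -⟩ := nu_spec hπ hb
  rw [hn, hm, ← Nat.cast_add]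
  exact nu_dvd (by rw [pow_add]; exact mul_dvd_mul hdn hdm)

theorem nu_sq {a : O_K} (ha : a ≠ 0) : nuVal π (a * a) = nuVal π a + nuVal π a := by
  obtain ⟨n, hn, hdn, hnd⟩ := nu_spec hπ ha
  rw [hn, ← Nat.cast_add]
  refine nu_eq_of (by rw [pow_add]; exact mul_dvd_mul hdn hdn) ?_
  intro hd
  have hprime : Prime π := hπ.prime
  -- a*a has π-adic valuation exactly 2n
  obtain ⟨u, hu⟩ : ∃ u : O_K, a = π ^ n * u ∧ True := by
    obtain ⟨u, hu⟩ := hdn; exact ⟨u, hu, trivial⟩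
  obtain ⟨hu, -⟩ := hu
  have hu0 : ¬ π ∣ u := by
    intro ⟨c, hc⟩
    exact hnd ⟨c, by rw [hu, hc, pow_succ]; ring⟩
  rw [hu] at hd
  have : π ^ (n + n) * π ∣ π ^ (n + n) * (u * u) := by
    rw [← pow_succ]
    refine dvd_trans hd (dvd_of_eq ?_)
    rw [pow_add]; ring
  have hπn : (π : O_K) ^ (n + n) ≠ 0 := pow_ne_zero _ hπ.ne_zero
  have hdvd : π ∣ u * u := (mul_dvd_mul_iff_left hπn).mp this
  rcases hprime.dvd_mul.mp hdvd with h | h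
  · exact hu0 h
  · exact hu0 h

theorem nu_add_eq_right {a b : O_K} (h : nuVal π b < nuVal π a) :
    nuVal π (a + b) = nuVal π b := by
  refine le_antisymm ?_ ?_
  · by_contra hc
    push_neg at hc
    have h1 : nuVal π b < min (nuVal π (a + b)) (nuVal π (-a)) := by
      rw [nu_neg hπ]; exact lt_min hc h
    have h2 : min (nuVal π (a + b)) (nuVal π (-a)) ≤ nuVal π b := by
      have := nu_add hπ (a := a + b) (b := -a)
      simpa using this
    exact absurd h2 (not_le.mpr h1)
  · refine le_trans (le_of_eq ?_) (nu_add hπ (a := a) (b := b))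
    exact (min_eq_right (le_of_lt h)).symm

end NuVal

section Mu0

variable {O_K : Type*} [CommRing O_K] [IsDomain O_K] [IsDiscreteValuationRing O_K]
  {π : O_K} (hπ : Irreducible π)

theorem mu0_le (G : Polynomial O_K) (j : ℕ) : mu0 π G ≤ nuVal π (G.coeff j) + j :=
  iInf_le _ j

theorem le_mu0 {G : Polynomial O_K} {c : ℕ∞} (h : ∀ j, c ≤ nuVal π (G.coeff j) + j) :
    c ≤ mu0 π G :=
  le_iInf h

theorem mu0_exists (G : Polynomial O_K) : ∃ j, nuVal π (G.coeff j) + j = mu0 π G :=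
  enat_exists_eq_iInf _

include hπ

theorem mu0_add {G G' : Polynomial O_K} :
    min (mu0 π G) (mu0 π G') ≤ mu0 π (G + G') := by
  refine le_mu0 fun j => ?_
  rw [Polynomial.coeff_add]
  refine le_trans ?_ (add_le_add_left (nu_add hπ) (j : ℕ∞))
  rw [← min_add_add_right]
  exact min_le_min (mu0_le G j) (mu0_le G' j)

theorem mu0_neg (G : Polynomial O_K) : mu0 π (-G) = mu0 π G := by
  unfold mu0
  refine iInf_congr fun j => ?_
  rw [Polynomial.coeff_neg, nu_neg hπ]

theorem nu_sum {s : Finset ℕ} {c : ℕ∞} {d : ℕ∞} {f : ℕ → O_K}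
    (h : ∀ i ∈ s, c ≤ nuVal π (f i) + d) : c ≤ nuVal π (∑ i ∈ s, f i) + d := by
  classical
  induction s using Finset.cons_induction with
  | empty => simp [nu_zero]
  | cons x s hx ih =>
    rw [Finset.sum_cons]
    refine le_trans ?_ (add_le_add_left (nu_add hπ) d)
    rw [← min_add_add_right]
    exact le_min (h x (Finset.mem_cons_self x s))
      (ih fun i hi => h i (Finset.mem_cons_of_mem hi))

theorem nu_sum_pair {s : Finset (ℕ × ℕ)} {c : ℕ∞} {d : ℕ∞} {f : ℕ × ℕ → O_K}
    (h : ∀ i ∈ s, c ≤ nuVal π (f i) + d) : c ≤ nuVal π (∑ i ∈ s, f i) + d := by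
  classical
  induction s using Finset.cons_induction with
  | empty => simp [nu_zero]
  | cons x s hx ih =>
    rw [Finset.sum_cons]
    refine le_trans ?_ (add_le_add_left (nu_add hπ) d)
    rw [← min_add_add_right]
    exact le_min (h x (Finset.mem_cons_self x s))
      (ih fun i hi => h i (Finset.mem_cons_of_mem hi))

theorem mu0_mul_ge {G G' : Polynomial O_K} :
    mu0 π G + mu0 π G' ≤ mu0 π (G * G') := by
  refine le_mu0 fun j => ?_
  rw [Polynomial.coeff_mul]
  refine nu_sum_pair hπ fun p hp => ?_
  rw [Finset.HasAntidiagonal.mem_antidiagonal] at hp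
  calc mu0 π G + mu0 π G'
      ≤ (nuVal π (G.coeff p.1) + p.1) + (nuVal π (G'.coeff p.2) + p.2) :=
        add_le_add (mu0_le G p.1) (mu0_le G' p.2)
    _ = (nuVal π (G.coeff p.1) + nuVal π (G'.coeff p.2)) + ((p.1 + p.2 : ℕ) : ℕ∞) := by
        push_cast; ring
    _ ≤ nuVal π (G.coeff p.1 * G'.coeff p.2) + j := by
        rw [hp]
        exact add_le_add_left (nu_mul_ge hπ) _

end Mu0

section SqCoeff

variable {O_K : Type*} [CommRing O_K]

theorem sq_coeff (G : Polynomial O_K) (n : ℕ) :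
    (G * G).coeff n =
      (if 2 ∣ n then G.coeff (n / 2) * G.coeff (n / 2) else 0) +
        2 * ∑ p ∈ (Finset.HasAntidiagonal.antidiagonal n).filter (fun p => p.1 < p.2),
          G.coeff p.1 * G.coeff p.2 := by
  classical
  rw [Polynomial.coeff_mul]
  set f : ℕ × ℕ → O_K := fun p => G.coeff p.1 * G.coeff p.2 with hf
  have hsplit : ∑ p ∈ Finset.HasAntidiagonal.antidiagonal n, f p =
      (∑ p ∈ (Finset.HasAntidiagonal.antidiagonal n).filter (fun p => p.1 < p.2), f p) +
      (∑ p ∈ (Finset.HasAntidiagonal.antidiagonal n).filter (fun p => ¬ p.1 < p.2), f p) :=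
    (Finset.sum_filter_add_sum_filter_not _ _ _).symm
  have hsplit2 : ∑ p ∈ (Finset.HasAntidiagonal.antidiagonal n).filter (fun p => ¬ p.1 < p.2), f p =
      (∑ p ∈ ((Finset.HasAntidiagonal.antidiagonal n).filter (fun p => ¬ p.1 < p.2)).filter
        (fun p => p.1 = p.2), f p) +
      (∑ p ∈ ((Finset.HasAntidiagonal.antidiagonal n).filter (fun p => ¬ p.1 < p.2)).filter
        (fun p => ¬ p.1 = p.2), f p) :=
    (Finset.sum_filter_add_sum_filter_not _ _ _).symm
  have e1 : ((Finset.HasAntidiagonal.antidiagonal n).filter (fun p => ¬ p.1 < p.2)).filter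
      (fun p => p.1 = p.2) = (Finset.HasAntidiagonal.antidiagonal n).filter (fun p : ℕ × ℕ => p.1 = p.2) := by
    rw [Finset.filter_filter]
    ext p
    simp only [Finset.mem_filter, Finset.HasAntidiagonal.mem_antidiagonal, not_lt]
    omega
  have e2 : ((Finset.HasAntidiagonal.antidiagonal n).filter (fun p => ¬ p.1 < p.2)).filter
      (fun p => ¬ p.1 = p.2) = (Finset.HasAntidiagonal.antidiagonal n).filter (fun p : ℕ × ℕ => p.2 < p.1) := by
    rw [Finset.filter_filter]
    ext p
    simp only [Finset.mem_filter, Finset.HasAntidiagonal.mem_antidiagonal, not_lt]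
    omega
  have e3 : ∑ p ∈ (Finset.HasAntidiagonal.antidiagonal n).filter (fun p : ℕ × ℕ => p.2 < p.1), f p =
      ∑ p ∈ (Finset.HasAntidiagonal.antidiagonal n).filter (fun p : ℕ × ℕ => p.1 < p.2), f p := by
    refine Finset.sum_nbij' (fun p => Prod.swap p) (fun p => Prod.swap p) ?_ ?_ ?_ ?_ ?_
    · intro p hp
      simp only [Finset.mem_filter, Finset.HasAntidiagonal.mem_antidiagonal, Prod.fst_swap, Prod.snd_swap]
        at hp ⊢
      exact ⟨by omega, hp.2⟩
    · intro p hp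
      simp only [Finset.mem_filter, Finset.HasAntidiagonal.mem_antidiagonal, Prod.fst_swap, Prod.snd_swap]
        at hp ⊢
      exact ⟨by omega, hp.2⟩
    · intro p _; simp
    · intro p _; simp
    · intro p _
      simp only [hf, Prod.fst_swap, Prod.snd_swap]
      ring
  have e4 : (Finset.HasAntidiagonal.antidiagonal n).filter (fun p : ℕ × ℕ => p.1 = p.2) =
      if 2 ∣ n then {((n / 2 : ℕ), (n / 2 : ℕ))} else (∅ : Finset (ℕ × ℕ)) := by
    split_ifs with h
    · ext p
      simp only [Finset.mem_filter, Finset.HasAntidiagonal.mem_antidiagonal, Finset.mem_singleton,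
        Prod.ext_iff]
      omega
    · ext p
      simp only [Finset.mem_filter, Finset.HasAntidiagonal.mem_antidiagonal, Finset.notMem_empty, iff_false,
        not_and]
      omega
  have e5 : ∑ p ∈ (Finset.HasAntidiagonal.antidiagonal n).filter (fun p : ℕ × ℕ => p.1 = p.2), f p =
      (if 2 ∣ n then G.coeff (n / 2) * G.coeff (n / 2) else 0) := by
    rw [e4]
    split_ifs with h
    · rw [Finset.sum_singleton]
    · rw [Finset.sum_empty]
  rw [hsplit, hsplit2, e1, e2, e3, e5]
  ring

end SqCoeff

section MoreMu0

variable {O_K : Type*} [CommRing O_K] [IsDomain O_K] [IsDiscreteValuationRing O_K]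
  {π : O_K} (hπ : Irreducible π)

include hπ

theorem mu0_sub {G G' : Polynomial O_K} :
    min (mu0 π G) (mu0 π G') ≤ mu0 π (G - G') := by
  rw [sub_eq_add_neg, ← mu0_neg hπ G']
  exact mu0_add hπ

theorem mu0_two_mul (h2 : (1 : ℕ∞) ≤ nuVal π (2 : O_K)) (G : Polynomial O_K) :
    1 + mu0 π G ≤ mu0 π (2 * G) := by
  refine le_mu0 fun j => ?_
  rw [Polynomial.coeff_ofNat_mul]
  calc (1 : ℕ∞) + mu0 π G ≤ nuVal π (2 : O_K) + (nuVal π (G.coeff j) + j) :=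
        add_le_add h2 (mu0_le G j)
    _ = (nuVal π (2 : O_K) + nuVal π (G.coeff j)) + j := by ring
    _ ≤ nuVal π (2 * G.coeff j) + j := add_le_add_left (nu_mul_ge hπ) _

theorem mu0_sq_even (h2 : (1 : ℕ∞) ≤ nuVal π (2 : O_K)) (G : Polynomial O_K) (j : ℕ) :
    1 + (mu0 π G + mu0 π G) ≤
      nuVal π ((G * G).coeff (2 * j) - G.coeff j * G.coeff j) + ((2 * j : ℕ) : ℕ∞) := by
  have hsq := sq_coeff G (2 * j)
  rw [if_pos ⟨j, rfl⟩] at hsq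
  have hj : (2 * j) / 2 = j := by omega
  rw [hj] at hsq
  have : (G * G).coeff (2 * j) - G.coeff j * G.coeff j =
      2 * ∑ p ∈ (Finset.HasAntidiagonal.antidiagonal (2 * j)).filter (fun p => p.1 < p.2),
        G.coeff p.1 * G.coeff p.2 := by
    rw [hsq]; ring
  rw [this]
  calc (1 : ℕ∞) + (mu0 π G + mu0 π G)
      ≤ nuVal π (2 : O_K) + (nuVal π (∑ p ∈ (Finset.HasAntidiagonal.antidiagonal (2 * j)).filter
          (fun p => p.1 < p.2), G.coeff p.1 * G.coeff p.2) + ((2 * j : ℕ) : ℕ∞)) := by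
        refine add_le_add h2 ?_
        refine nu_sum_pair hπ fun p hp => ?_
        rw [Finset.mem_filter, Finset.HasAntidiagonal.mem_antidiagonal] at hp
        calc mu0 π G + mu0 π G
            ≤ (nuVal π (G.coeff p.1) + p.1) + (nuVal π (G.coeff p.2) + p.2) :=
              add_le_add (mu0_le G p.1) (mu0_le G p.2)
          _ = (nuVal π (G.coeff p.1) + nuVal π (G.coeff p.2)) + ((p.1 + p.2 : ℕ) : ℕ∞) := by
              push_cast; ring
          _ ≤ nuVal π (G.coeff p.1 * G.coeff p.2) + ((2 * j : ℕ) : ℕ∞) := by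
              rw [hp.1]
              exact add_le_add_left (nu_mul_ge hπ) _
    _ = (nuVal π (2 : O_K) + nuVal π (∑ p ∈ (Finset.HasAntidiagonal.antidiagonal (2 * j)).filter
          (fun p => p.1 < p.2), G.coeff p.1 * G.coeff p.2)) + ((2 * j : ℕ) : ℕ∞) := by ring
    _ ≤ _ := add_le_add_left (nu_mul_ge hπ) _

theorem mu0_sq_odd (h2 : (1 : ℕ∞) ≤ nuVal π (2 : O_K)) (G : Polynomial O_K) {i : ℕ}
    (hi : ¬ 2 ∣ i) :
    1 + (mu0 π G + mu0 π G) ≤ nuVal π ((G * G).coeff i) + (i : ℕ∞) := by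
  have hsq := sq_coeff G i
  rw [if_neg hi, zero_add] at hsq
  rw [hsq]
  calc (1 : ℕ∞) + (mu0 π G + mu0 π G)
      ≤ nuVal π (2 : O_K) + (nuVal π (∑ p ∈ (Finset.HasAntidiagonal.antidiagonal i).filter
          (fun p => p.1 < p.2), G.coeff p.1 * G.coeff p.2) + (i : ℕ∞)) := by
        refine add_le_add h2 ?_
        refine nu_sum_pair hπ fun p hp => ?_
        rw [Finset.mem_filter, Finset.HasAntidiagonal.mem_antidiagonal] at hp
        calc mu0 π G + mu0 π G
            ≤ (nuVal π (G.coeff p.1) + p.1) + (nuVal π (G.coeff p.2) + p.2) :=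
              add_le_add (mu0_le G p.1) (mu0_le G p.2)
          _ = (nuVal π (G.coeff p.1) + nuVal π (G.coeff p.2)) + ((p.1 + p.2 : ℕ) : ℕ∞) := by
              push_cast; ring
          _ ≤ nuVal π (G.coeff p.1 * G.coeff p.2) + (i : ℕ∞) := by
              rw [hp.1]
              exact add_le_add_left (nu_mul_ge hπ) _
    _ = (nuVal π (2 : O_K) + nuVal π (∑ p ∈ (Finset.HasAntidiagonal.antidiagonal i).filter
          (fun p => p.1 < p.2), G.coeff p.1 * G.coeff p.2)) + (i : ℕ∞) := by ring
    _ ≤ _ := add_le_add_left (nu_mul_ge hπ) _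

end MoreMu0

theorem nu_two' {O_K : Type*} [CommRing O_K] [IsDomain O_K] [IsDiscreteValuationRing O_K]
    {π : O_K} (hπ : Irreducible π) [CharP (IsLocalRing.ResidueField O_K) 2] :
    (1 : ℕ∞) ≤ nuVal π (2 : O_K) := by
  have h0 : (2 : IsLocalRing.ResidueField O_K) = 0 := by
    exact_mod_cast CharP.cast_eq_zero (IsLocalRing.ResidueField O_K) 2
  have hres : IsLocalRing.residue O_K (2 : O_K) = 0 := by
    rw [map_ofNat]; exact h0
  have hmem : (2 : O_K) ∈ IsLocalRing.maximalIdeal O_K :=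
    (IsLocalRing.residue_eq_zero_iff _).mp hres
  rw [(IsDiscreteValuationRing.irreducible_iff_uniformizer π).mp hπ] at hmem
  obtain ⟨c, hc⟩ := Ideal.mem_span_singleton'.mp hmem
  have : π ^ 1 ∣ (2 : O_K) := ⟨c, by rw [pow_one, ← hc]; ring⟩
  exact_mod_cast nu_dvd this

section Helpers2

theorem enat_two_mul_ne_top {x : ℕ∞} (h : x ≠ ⊤) : 2 * x ≠ ⊤ := by
  induction x using ENat.recTopCoe with
  | top => exact absurd rfl h
  | coe n =>
    rw [show (2 : ℕ∞) * (n : ℕ∞) = ((2 * n : ℕ) : ℕ∞) by push_cast; ring]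
    exact ENat.coe_ne_top _

variable {O_K : Type*} [CommRing O_K] [IsDomain O_K] [IsDiscreteValuationRing O_K]
  {π : O_K} (hπ : Irreducible π)

include hπ

theorem nu_sub_bound {a b : O_K} {c d : ℕ∞} (ha : c ≤ nuVal π a + d)
    (hb : c ≤ nuVal π b + d) : c ≤ nuVal π (a - b) + d := by
  have hmin : min (nuVal π a) (nuVal π b) ≤ nuVal π (a - b) := by
    rw [sub_eq_add_neg, ← nu_neg hπ b]
    exact nu_add hπ
  calc c ≤ min (nuVal π a + d) (nuVal π b + d) := le_min ha hb
    _ = min (nuVal π a) (nuVal π b) + d := min_add_add_right _ _ _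
    _ ≤ _ := add_le_add_left hmin d

theorem nu_add_bound {a b : O_K} {c d : ℕ∞} (ha : c ≤ nuVal π a + d)
    (hb : c ≤ nuVal π b + d) : c ≤ nuVal π (a + b) + d := by
  calc c ≤ min (nuVal π a + d) (nuVal π b + d) := le_min ha hb
    _ = min (nuVal π a) (nuVal π b) + d := min_add_add_right _ _ _
    _ ≤ _ := add_le_add_left (nu_add hπ) d

end Helpers2

theorem enat_add_ne_top {x y : ℕ∞} (hx : x ≠ ⊤) (hy : y ≠ ⊤) : x + y ≠ ⊤ := by
  lift x to ℕ using hx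
  lift y to ℕ using hy
  rw [← Nat.cast_add]
  exact ENat.coe_ne_top _


/-- if `H` is an adapted shift for `P`, and `R = Q − 2H`, `S = P + QH − H²`,
then `λ₀(R, S) ≥ λ₀(Q, P)`, with strict inequality whenever some substitution
`y = z + H'(x)` increases `λ₀`. -/
theorem statement6 (O_K : Type*) [CommRing O_K] [IsDomain O_K] [IsDiscreteValuationRing O_K]
    (π : O_K) (hπ : Irreducible π)
    [CharP (IsLocalRing.ResidueField O_K) 2] [PerfectField (IsLocalRing.ResidueField O_K)]
    (Q P H : Polynomial O_K) (hH : IsAdaptedShift π P H) :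
    lam0 π (Q - 2 * H) (P + Q * H - H ^ 2) ≥ lam0 π Q P ∧
      ((∃ H' : Polynomial O_K,
          lam0 π (Q - 2 * H') (P + Q * H' - H' ^ 2) > lam0 π Q P) →
        lam0 π (Q - 2 * H) (P + Q * H - H ^ 2) > lam0 π Q P) := by
  have h2 : (1 : ℕ∞) ≤ nuVal π (2 : O_K) := nu_two' hπ
  set lam := lam0 π Q P with hlam
  have hlamQ : lam ≤ 2 * mu0 π Q := min_le_left _ _
  have hlamP : lam ≤ mu0 π P := min_le_right _ _
  have keyH : mu0 π P ≤ mu0 π H + mu0 π H := by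
    obtain ⟨j, hj⟩ := mu0_exists (π := π) H
    by_cases he : H.coeff j = 0
    · rw [← hj, he, nu_zero]
      simp
    · have hcase : P.coeff (2 * j) ≠ 0 ∧
          ∃ m : ℕ, nuVal π (P.coeff (2 * j)) = ((2 * m : ℕ) : ℕ∞) := by
        by_contra hc
        refine he ((hH j).1 ?_)
        tauto
      obtain ⟨u, hu⟩ := (hH j).2 hcase
      have hdvd : P.coeff (2 * j) ∣ H.coeff j * H.coeff j :=
        ⟨1 + π * u, by rw [← pow_two, hu]⟩
      have h1 : nuVal π (P.coeff (2 * j)) ≤ nuVal π (H.coeff j) + nuVal π (H.coeff j) := by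
        rw [← nu_sq hπ he]
        exact nu_dvd_mono hπ hdvd
      calc mu0 π P ≤ nuVal π (P.coeff (2 * j)) + ((2 * j : ℕ) : ℕ∞) := mu0_le P (2 * j)
        _ ≤ (nuVal π (H.coeff j) + nuVal π (H.coeff j)) + ((2 * j : ℕ) : ℕ∞) :=
            add_le_add_left h1 _
        _ = (nuVal π (H.coeff j) + (j : ℕ∞)) + (nuVal π (H.coeff j) + (j : ℕ∞)) := by
            push_cast; ring
        _ = mu0 π H + mu0 π H := by rw [hj]
  have hA1 : lam ≤ 2 * mu0 π (Q - 2 * H) := by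
    have hmin : min (mu0 π Q) (mu0 π (2 * H)) ≤ mu0 π (Q - 2 * H) := mu0_sub hπ
    rcases le_total (mu0 π Q) (mu0 π (2 * H)) with hc | hc
    · calc lam ≤ 2 * mu0 π Q := hlamQ
        _ ≤ 2 * mu0 π (Q - 2 * H) :=
          mul_le_mul_right (le_trans (le_of_eq (min_eq_left hc).symm) hmin) 2
    · have hmm : mu0 π (2 * H) ≤ mu0 π (Q - 2 * H) :=
        le_trans (le_of_eq (min_eq_right hc).symm) hmin
      calc lam ≤ mu0 π P := hlamP
        _ ≤ mu0 π H + mu0 π H := keyH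
        _ ≤ (1 + mu0 π H) + (1 + mu0 π H) := add_le_add le_add_self le_add_self
        _ ≤ mu0 π (2 * H) + mu0 π (2 * H) :=
            add_le_add (mu0_two_mul hπ h2 H) (mu0_two_mul hπ h2 H)
        _ = 2 * mu0 π (2 * H) := (two_mul _).symm
        _ ≤ 2 * mu0 π (Q - 2 * H) := mul_le_mul_right hmm 2
  have hμQH : lam ≤ mu0 π (Q * H) := by
    refine le_trans ?_ (mu0_mul_ge hπ)
    refine enat_two_mul_le ?_
    calc 2 * lam = lam + lam := two_mul lam
      _ ≤ 2 * mu0 π Q + mu0 π P := add_le_add hlamQ hlamP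
      _ ≤ 2 * mu0 π Q + (mu0 π H + mu0 π H) := add_le_add_right keyH _
      _ = 2 * (mu0 π Q + mu0 π H) := by ring
  have hμH2 : lam ≤ mu0 π (H ^ 2) := by
    rw [pow_two]
    exact le_trans (le_trans hlamP keyH) (mu0_mul_ge hπ)
  have hA2 : lam ≤ mu0 π (P + Q * H - H ^ 2) := by
    refine le_trans ?_ (mu0_sub hπ)
    exact le_min (le_trans (le_min hlamP hμQH) (mu0_add hπ)) hμH2
  refine ⟨le_min hA1 hA2, ?_⟩
  rintro ⟨H', hH'⟩
  have hlamne : lam ≠ ⊤ := fun ht => not_top_lt (ht ▸ hH')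
  have hH'' : lam < min (2 * mu0 π (Q - 2 * H')) (mu0 π (P + Q * H' - H' ^ 2)) := hH'
  obtain ⟨hR', hS'⟩ := lt_min_iff.mp hH''
  -- Step B1 : lam ≤ μH' + μH'
  have hB1 : lam ≤ mu0 π H' + mu0 π H' := by
    by_contra hc
    push_neg at hc
    have hωne : mu0 π H' ≠ ⊤ := by
      intro ht
      rw [ht, top_add] at hc
      exact not_top_lt hc
    have hBne : mu0 π H' + mu0 π H' ≠ ⊤ := enat_add_ne_top hωne hωne
    obtain ⟨j0, hj0⟩ := mu0_exists (π := π) H'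
    have hej : H'.coeff j0 ≠ 0 := by
      intro h0
      rw [h0, nu_zero, top_add] at hj0
      exact hωne hj0.symm
    have hsq : nuVal π (H'.coeff j0 * H'.coeff j0) + ((2 * j0 : ℕ) : ℕ∞)
        = mu0 π H' + mu0 π H' := by
      rw [nu_sq hπ hej, ← hj0]
      push_cast; ring
    have hcross : (mu0 π H' + mu0 π H') + 1 ≤
        nuVal π ((H' * H').coeff (2 * j0) - H'.coeff j0 * H'.coeff j0)
          + ((2 * j0 : ℕ) : ℕ∞) := by
      refine le_trans ?_ (mu0_sq_even hπ h2 H' j0)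
      rw [add_comm]
    have hQgt : mu0 π H' < mu0 π Q := by
      refine enat_two_mul_lt ?_
      calc 2 * mu0 π H' = mu0 π H' + mu0 π H' := two_mul _
        _ < lam := hc
        _ ≤ 2 * mu0 π Q := hlamQ
    have hY : (mu0 π H' + mu0 π H') + 1 ≤
        nuVal π (P.coeff (2 * j0) + (Q * H').coeff (2 * j0) -
          ((H' * H').coeff (2 * j0) - H'.coeff j0 * H'.coeff j0)) + ((2 * j0 : ℕ) : ℕ∞) := by
      refine nu_sub_bound hπ (nu_add_bound hπ ?_ ?_) hcross
      · refine (ENat.add_one_le_iff hBne).mpr ?_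
        exact lt_of_lt_of_le (lt_of_lt_of_le hc hlamP) (mu0_le P (2 * j0))
      · refine (ENat.add_one_le_iff hBne).mpr ?_
        calc mu0 π H' + mu0 π H' < mu0 π Q + mu0 π H' :=
              (ENat.add_lt_add_iff_right hωne).mpr hQgt
          _ ≤ mu0 π (Q * H') := mu0_mul_ge hπ
          _ ≤ nuVal π ((Q * H').coeff (2 * j0)) + ((2 * j0 : ℕ) : ℕ∞) := mu0_le _ (2 * j0)
    have hXdecomp : (P + Q * H' - H' ^ 2).coeff (2 * j0) =
        (P.coeff (2 * j0) + (Q * H').coeff (2 * j0) -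
          ((H' * H').coeff (2 * j0) - H'.coeff j0 * H'.coeff j0)) +
          (-(H'.coeff j0 * H'.coeff j0)) := by
      rw [Polynomial.coeff_sub, Polynomial.coeff_add, pow_two]
      ring
    have hlt' : nuVal π (-(H'.coeff j0 * H'.coeff j0)) <
        nuVal π (P.coeff (2 * j0) + (Q * H').coeff (2 * j0) -
          ((H' * H').coeff (2 * j0) - H'.coeff j0 * H'.coeff j0)) := by
      rw [nu_neg hπ]
      refine (ENat.add_lt_add_iff_right (ENat.coe_ne_top (2 * j0))).mp ?_
      calc nuVal π (H'.coeff j0 * H'.coeff j0) + ((2 * j0 : ℕ) : ℕ∞)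
          = mu0 π H' + mu0 π H' := hsq
        _ < (mu0 π H' + mu0 π H') + 1 := (ENat.lt_add_one_iff hBne).mpr le_rfl
        _ ≤ _ := hY
    have hXeq : nuVal π ((P + Q * H' - H' ^ 2).coeff (2 * j0)) =
        nuVal π (H'.coeff j0 * H'.coeff j0) := by
      rw [hXdecomp, nu_add_eq_right hπ hlt', nu_neg hπ]
    have hcontr : mu0 π (P + Q * H' - H' ^ 2) ≤ mu0 π H' + mu0 π H' := by
      refine le_trans (mu0_le _ (2 * j0)) ?_
      rw [hXeq]
      exact le_of_eq hsq
    exact absurd (lt_trans (lt_of_lt_of_le hS' hcontr) hc) (lt_irrefl lam)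
  -- Step B2 : lam < 2 μQ
  have hB2 : lam < 2 * mu0 π Q := by
    have hQ' : min (mu0 π (Q - 2 * H')) (mu0 π (2 * H')) ≤ mu0 π Q := by
      have heq : (Q - 2 * H') + 2 * H' = Q := by ring
      exact le_trans (mu0_add hπ) (le_of_eq (by rw [heq]))
    rcases le_total (mu0 π (Q - 2 * H')) (mu0 π (2 * H')) with hc | hc
    · exact lt_of_lt_of_le hR'
        (mul_le_mul_right (le_trans (le_of_eq (min_eq_left hc).symm) hQ') 2)
    · have hmm : mu0 π (2 * H') ≤ mu0 π Q :=
        le_trans (le_of_eq (min_eq_right hc).symm) hQ'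
      have hstep : lam + 1 ≤ 2 * mu0 π (2 * H') := by
        calc lam + 1 ≤ (mu0 π H' + mu0 π H') + 1 := add_le_add_left hB1 1
          _ ≤ (mu0 π H' + mu0 π H') + 2 := add_le_add_right one_le_two _
          _ = (1 + mu0 π H') + (1 + mu0 π H') := by ring
          _ ≤ mu0 π (2 * H') + mu0 π (2 * H') :=
              add_le_add (mu0_two_mul hπ h2 H') (mu0_two_mul hπ h2 H')
          _ = 2 * mu0 π (2 * H') := (two_mul _).symm
      calc lam < lam + 1 := (ENat.lt_add_one_iff hlamne).mpr le_rfl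
        _ ≤ 2 * mu0 π (2 * H') := hstep
        _ ≤ 2 * mu0 π Q := mul_le_mul_right hmm 2
  have hB2' : lam + 1 ≤ 2 * mu0 π Q := (ENat.add_one_le_iff hlamne).mpr hB2
  -- key : products with Q
  have hkey : ∀ G : Polynomial O_K, lam ≤ mu0 π G + mu0 π G → lam < mu0 π (Q * G) := by
    intro G hG
    refine lt_of_lt_of_le ?_ (mu0_mul_ge hπ)
    by_contra hcon
    push_neg at hcon
    have h1 : 2 * lam + 1 ≤ 2 * (mu0 π Q + mu0 π G) := by
      calc 2 * lam + 1 = (lam + 1) + lam := by rw [two_mul]; ring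
        _ ≤ 2 * mu0 π Q + (mu0 π G + mu0 π G) := add_le_add hB2' hG
        _ = 2 * (mu0 π Q + mu0 π G) := by ring
    have h2' : 2 * (mu0 π Q + mu0 π G) ≤ 2 * lam := mul_le_mul_right hcon 2
    have h3 : 2 * lam + 1 ≤ 2 * lam := le_trans h1 h2'
    have h4 : 2 * lam < 2 * lam + 1 :=
      (ENat.lt_add_one_iff (enat_two_mul_ne_top hlamne)).mpr le_rfl
    exact absurd h3 (not_le.mpr h4)
  -- B3
  have hB3 : lam < mu0 π (P - H' ^ 2) := by
    have heq : P - H' ^ 2 = (P + Q * H' - H' ^ 2) - Q * H' := by ring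
    rw [heq]
    exact lt_of_lt_of_le (lt_min hS' (hkey H' hB1)) (mu0_sub hπ)
  have hB3' : ∀ i : ℕ, lam + 1 ≤ nuVal π (P.coeff i - (H' * H').coeff i) + (i : ℕ∞) := by
    intro i
    have hmu := mu0_le (π := π) (P - H' ^ 2) i
    have hco : (P - H' ^ 2).coeff i = P.coeff i - (H' * H').coeff i := by
      rw [Polynomial.coeff_sub, pow_two]
    rw [hco] at hmu
    exact le_trans ((ENat.add_one_le_iff hlamne).mpr hB3) hmu
  -- B4
  have hB4 : lam + 1 ≤ mu0 π (P - H ^ 2) := by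
    refine le_mu0 fun i => ?_
    rw [Polynomial.coeff_sub, pow_two]
    by_cases hpar : 2 ∣ i
    · obtain ⟨j, rfl⟩ := hpar
      have hsplit : P.coeff (2 * j) - (H * H).coeff (2 * j) =
          (P.coeff (2 * j) - H.coeff j * H.coeff j) -
            ((H * H).coeff (2 * j) - H.coeff j * H.coeff j) := by ring
      rw [hsplit]
      refine nu_sub_bound hπ ?_ ?_
      · by_cases ha : P.coeff (2 * j) = 0
        · have he0 : H.coeff j = 0 := (hH j).1 (Or.inl ha)
          rw [ha, he0, mul_zero, sub_zero, nu_zero, top_add]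
          exact le_top
        by_cases hev : ∃ m : ℕ, nuVal π (P.coeff (2 * j)) = ((2 * m : ℕ) : ℕ∞)
        · obtain ⟨u, hu⟩ := (hH j).2 ⟨ha, hev⟩
          have hu' : P.coeff (2 * j) - H.coeff j * H.coeff j =
              P.coeff (2 * j) * (-(π * u)) := by
            linear_combination -hu
          rw [hu']
          calc lam + 1 ≤ (nuVal π (P.coeff (2 * j)) + ((2 * j : ℕ) : ℕ∞)) + 1 :=
                add_le_add_left (le_trans hlamP (mu0_le P (2 * j))) 1
            _ = (nuVal π (P.coeff (2 * j)) + 1) + ((2 * j : ℕ) : ℕ∞) := by ring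
            _ ≤ (nuVal π (P.coeff (2 * j)) + nuVal π (-(π * u))) + ((2 * j : ℕ) : ℕ∞) := by
                refine add_le_add_left (add_le_add_right ?_ _) _
                rw [nu_neg hπ]
                exact_mod_cast nu_dvd (show π ^ 1 ∣ π * u from ⟨u, by rw [pow_one]⟩)
            _ ≤ nuVal π (P.coeff (2 * j) * -(π * u)) + ((2 * j : ℕ) : ℕ∞) :=
                add_le_add_left (nu_mul_ge hπ) _
        · have he0 : H.coeff j = 0 := (hH j).1 (Or.inr hev)
          rw [he0, mul_zero, sub_zero]
          by_contra hcon
          push_neg at hcon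
          have hle : nuVal π (P.coeff (2 * j)) + ((2 * j : ℕ) : ℕ∞) ≤ lam :=
            (ENat.lt_add_one_iff hlamne).mp hcon
          have hge : lam ≤ nuVal π (P.coeff (2 * j)) + ((2 * j : ℕ) : ℕ∞) :=
            le_trans hlamP (mu0_le P _)
          have heq : nuVal π (P.coeff (2 * j)) + ((2 * j : ℕ) : ℕ∞) = lam :=
            le_antisymm hle hge
          have hνa_ne : nuVal π (P.coeff (2 * j)) ≠ ⊤ := by
            intro ht
            rw [ht, top_add] at heq
            exact hlamne heq.symm
          have hstep : lam + 1 ≤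
              nuVal π (P.coeff (2 * j) - H'.coeff j * H'.coeff j) + ((2 * j : ℕ) : ℕ∞) := by
            have hx : P.coeff (2 * j) - H'.coeff j * H'.coeff j =
                (P.coeff (2 * j) - (H' * H').coeff (2 * j)) +
                  ((H' * H').coeff (2 * j) - H'.coeff j * H'.coeff j) := by ring
            rw [hx]
            refine nu_add_bound hπ (hB3' (2 * j)) ?_
            refine le_trans ?_ (mu0_sq_even hπ h2 H' j)
            calc lam + 1 = 1 + lam := add_comm _ _
              _ ≤ 1 + (mu0 π H' + mu0 π H') := add_le_add_right hB1 1
          have hlt : nuVal π (P.coeff (2 * j)) <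
              nuVal π (P.coeff (2 * j) - H'.coeff j * H'.coeff j) := by
            refine (ENat.add_lt_add_iff_right (ENat.coe_ne_top (2 * j))).mp ?_
            calc nuVal π (P.coeff (2 * j)) + ((2 * j : ℕ) : ℕ∞) = lam := heq
              _ < lam + 1 := (ENat.lt_add_one_iff hlamne).mpr le_rfl
              _ ≤ _ := hstep
          have hνe : nuVal π (H'.coeff j * H'.coeff j) = nuVal π (P.coeff (2 * j)) := by
            have hxx : H'.coeff j * H'.coeff j =
                -(P.coeff (2 * j) - H'.coeff j * H'.coeff j) + P.coeff (2 * j) := by ring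
            rw [hxx]
            refine nu_add_eq_right hπ ?_
            rw [nu_neg hπ]
            exact hlt
          have he'0 : H'.coeff j ≠ 0 := by
            intro h0
            rw [h0, mul_zero, nu_zero] at hνe
            exact hνa_ne hνe.symm
          rw [nu_sq hπ he'0] at hνe
          have hνe'_ne : nuVal π (H'.coeff j) ≠ ⊤ := by
            intro ht
            rw [ht, top_add] at hνe
            exact hνa_ne hνe.symm
          lift nuVal π (H'.coeff j) to ℕ using hνe'_ne with m hm
          refine hev ⟨m, ?_⟩
          rw [← hνe]
          push_cast
          ring
      · refine le_trans ?_ (mu0_sq_even hπ h2 H j)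
        calc lam + 1 = 1 + lam := add_comm _ _
          _ ≤ 1 + mu0 π P := add_le_add_right hlamP 1
          _ ≤ 1 + (mu0 π H + mu0 π H) := add_le_add_right keyH 1
    · refine nu_sub_bound hπ ?_ ?_
      · have hx : P.coeff i = (P.coeff i - (H' * H').coeff i) + (H' * H').coeff i := by ring
        rw [hx]
        refine nu_add_bound hπ (hB3' i) ?_
        refine le_trans ?_ (mu0_sq_odd hπ h2 H' hpar)
        calc lam + 1 = 1 + lam := add_comm _ _
          _ ≤ 1 + (mu0 π H' + mu0 π H') := add_le_add_right hB1 1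
      · refine le_trans ?_ (mu0_sq_odd hπ h2 H hpar)
        calc lam + 1 = 1 + lam := add_comm _ _
          _ ≤ 1 + mu0 π P := add_le_add_right hlamP 1
          _ ≤ 1 + (mu0 π H + mu0 π H) := add_le_add_right keyH 1
  -- conclusion
  have hfinal1 : lam < 2 * mu0 π (Q - 2 * H) := by
    have hmin : min (mu0 π Q) (mu0 π (2 * H)) ≤ mu0 π (Q - 2 * H) := mu0_sub hπ
    rcases le_total (mu0 π Q) (mu0 π (2 * H)) with hc | hc
    · exact lt_of_lt_of_le hB2
        (mul_le_mul_right (le_trans (le_of_eq (min_eq_left hc).symm) hmin) 2)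
    · have hmm : mu0 π (2 * H) ≤ mu0 π (Q - 2 * H) :=
        le_trans (le_of_eq (min_eq_right hc).symm) hmin
      have hstep : lam + 1 ≤ 2 * mu0 π (2 * H) := by
        calc lam + 1 ≤ (mu0 π H + mu0 π H) + 1 :=
              add_le_add_left (le_trans hlamP keyH) 1
          _ ≤ (mu0 π H + mu0 π H) + 2 := add_le_add_right one_le_two _
          _ = (1 + mu0 π H) + (1 + mu0 π H) := by ring
          _ ≤ mu0 π (2 * H) + mu0 π (2 * H) :=
              add_le_add (mu0_two_mul hπ h2 H) (mu0_two_mul hπ h2 H)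
          _ = 2 * mu0 π (2 * H) := (two_mul _).symm
      calc lam < lam + 1 := (ENat.lt_add_one_iff hlamne).mpr le_rfl
        _ ≤ 2 * mu0 π (2 * H) := hstep
        _ ≤ 2 * mu0 π (Q - 2 * H) := mul_le_mul_right hmm 2
  have hB4lt : lam < mu0 π (P - H ^ 2) := (ENat.add_one_le_iff hlamne).mp hB4
  have hfinal2 : lam < mu0 π (P + Q * H - H ^ 2) := by
    have heq : P + Q * H - H ^ 2 = (P - H ^ 2) + Q * H := by ring
    rw [heq]
    exact lt_of_lt_of_le (lt_min hB4lt (hkey H (le_trans hlamP keyH))) (mu0_add hπ)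
  exact lt_min hfinal1 hfinal2
end
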